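/- arXiv:1003.4333 — 14 statements merged into one kernel-verified Lean document; each statement's English description precedes it below -/
import Mathlib

section
/- Let K ⊆ L be a finite separable extension of F-finite fields of characteristic p > 0, and let e ≥ 1. If e₁^{1/p^e}, ..., eₙ^{1/p^e} form a basis for K^{1/p^e} over K, then they also form a basis for L^{1/p^e} over L. Equivalently, the natural map K^{1/p^e} ⊗_K L → L^{1/p^e} is an isomorphism. -/
/-!
Inside `Lr`, the field `Kr` is purely inseparable over `K` while `L` is separable over `K`, so
the two are linearly disjoint over `K`: a `K`-basis of `Kr` stays `L`-linearly independent.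
For spanning, a separable extension is spanned by its `p^e`-th powers, so for `x ∈ Lr` we can
write `x ^ p ^ e = ∑ kᵢ yᵢ ^ p ^ e` with `yᵢ ∈ L` and `kᵢ ∈ K`; with `rᵢ ∈ Kr` a `p^e`-th root
of `kᵢ`, injectivity of Frobenius gives `x = ∑ yᵢ rᵢ`. The product map then carries the
`L`-basis of `Kr ⊗[K] L` induced by a `K`-basis of `Kr` onto an `L`-basis of `Lr`.
-/

open scoped TensorProduct

section RootFields

variable {K L Kr Lr : Type*} [Field K] [Field L] [Field Kr] [Field Lr]
  [Algebra K L] [Algebra K Kr] [Algebra L Lr] [Algebra Kr Lr] [Algebra K Lr]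
  [IsScalarTower K L Lr] [IsScalarTower K Kr Lr]

theorem linearIndependent_algebraMap_comp_of_isPurelyInseparable_of_isSeparable
    [IsPurelyInseparable K Kr] [Algebra.IsSeparable K L] {ι : Type*} {b : ι → Kr}
    (hb : LinearIndependent K b) : LinearIndependent L (algebraMap Kr Lr ∘ b) := by
  have : Algebra.IsSeparable K (IsScalarTower.toAlgHom K L Lr).fieldRange :=
    AlgEquiv.Algebra.isSeparable (AlgEquiv.ofInjectiveField _)
  have hdisjoint := ((IsScalarTower.toAlgHom K L Lr).fieldRange
    |>.linearDisjoint_of_isPurelyInseparable_of_isSeparable Kr).symm'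
  exact hdisjoint.linearIndependent_left
    (hb.map' _ (AlgEquiv.ofInjectiveField (IsScalarTower.toAlgHom K Kr Lr)).toLinearEquiv.ker)

theorem span_range_algebraMap_eq_top_of_pow_mem (q n : ℕ) [ExpChar K q]
    [Algebra.IsSeparable K L]
    (hKr : ∀ a : K, ∃ r : Kr, r ^ q ^ n = algebraMap K Kr a)
    (hLr : ∀ x : Lr, x ^ q ^ n ∈ (algebraMap L Lr).range) :
    Submodule.span L (Set.range (algebraMap Kr Lr)) = ⊤ := by
  have : ExpChar Lr q := expChar_of_injective_algebraMap (algebraMap K Lr).injective q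
  choose root hroot using hKr
  refine eq_top_iff.2 fun x _ => ?_
  obtain ⟨a, ha⟩ := hLr x
  have hpowers := Field.span_map_pow_expChar_pow_eq_top_of_isSeparable (F := K) (E := L)
    (v := id) q n (by simp)
  obtain ⟨c, hc⟩ := Finsupp.mem_span_range_iff_exists_finsupp.1
    (hpowers ▸ Submodule.mem_top : a ∈ _)
  have hx : x = c.sum fun y k => y • algebraMap Kr Lr (root k) := by
    apply iterateFrobenius_inj Lr q n
    rw [iterateFrobenius_def, iterateFrobenius_def, ← ha, ← hc, Finsupp.sum, Finsupp.sum,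
      sum_pow_char_pow, map_sum]
    refine Finset.sum_congr rfl fun y _ => ?_
    rw [smul_pow, ← map_pow, hroot, ← IsScalarTower.algebraMap_apply,
      IsScalarTower.algebraMap_apply K L Lr, Algebra.smul_def, Algebra.smul_def, map_mul,
      mul_comm, id]
  rw [hx]
  exact Submodule.sum_mem _ fun y _ => Submodule.smul_mem _ _ (Submodule.subset_span ⟨_, rfl⟩)

theorem Submodule.span_range_algebraMap_comp_eq_top {ι : Type*} {v : ι → Kr}
    (hv : Submodule.span K (Set.range v) = ⊤)
    (h : Submodule.span L (Set.range (algebraMap Kr Lr)) = ⊤) :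
    Submodule.span L (Set.range (algebraMap Kr Lr ∘ v)) = ⊤ := by
  rw [eq_top_iff, ← h, Submodule.span_le]
  rintro _ ⟨r, rfl⟩
  have hr := Submodule.apply_mem_span_image_of_mem_span
    (IsScalarTower.toAlgHom K Kr Lr).toLinearMap (hv ▸ Submodule.mem_top : r ∈ _)
  rw [← Set.range_comp] at hr
  exact Submodule.span_le_restrictScalars K L _ hr

end RootFields

theorem Algebra.TensorProduct.productMap_bijective_of_basis {R A B S ι : Type*}
    [CommSemiring R] [CommSemiring A] [CommSemiring B] [CommSemiring S]
    [Algebra R A] [Algebra R B] [Algebra R S] [Algebra B S] [IsScalarTower R B S]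
    (b : Module.Basis ι R A) (c : Module.Basis ι B S) (f : A →ₐ[R] S) (hc : ∀ i, c i = f (b i)) :
    Function.Bijective (productMap f (IsScalarTower.toAlgHom R B S)) := by
  classical
  have hbasis : ∀ v, productMap f (IsScalarTower.toAlgHom R B S)
      ((TensorProduct.equivFinsuppOfBasisLeft b).symm v) = c.repr.symm v := by
    intro v
    rw [TensorProduct.equivFinsuppOfBasisLeft_symm_apply, map_finsuppSum,
      Module.Basis.repr_symm_apply, Finsupp.linearCombination_apply]
    refine Finsupp.sum_congr fun i _ => ?_
    rw [productMap_apply_tmul, hc, IsScalarTower.coe_toAlgHom', Algebra.smul_def, mul_comm]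
  have hfactor : ⇑(productMap f (IsScalarTower.toAlgHom R B S)) =
      c.repr.symm ∘ TensorProduct.equivFinsuppOfBasisLeft b := by
    ext x
    simpa using hbasis (TensorProduct.equivFinsuppOfBasisLeft b x)
  rw [hfactor]
  exact c.repr.symm.bijective.comp (TensorProduct.equivFinsuppOfBasisLeft b).bijective

theorem basis_of_roots_stable_under_separable_extension_general
    (p : ℕ) [Fact p.Prime] (e : ℕ)
    (K L Kr Lr : Type) [Field K] [Field L] [Field Kr] [Field Lr]
    [Algebra K L] [Algebra K Kr] [Algebra L Lr] [Algebra Kr Lr] [Algebra K Lr]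
    [IsScalarTower K L Lr] [IsScalarTower K Kr Lr]
    [CharP K p]
    -- the extension `K ⊆ L` is finite and separable
    [Algebra.IsSeparable K L]
    -- `Kr = K^{1/p^e}`: every element of `Kr` is a `p^e`-th root of an element of `K`,
    -- and every element of `K` admits a `p^e`-th root in `Kr`
    (hKr : ∀ x : Kr, x ^ p ^ e ∈ (algebraMap K Kr).range)
    (hKr' : ∀ a : K, ∃ x : Kr, x ^ p ^ e = algebraMap K Kr a)
    -- `Lr = L^{1/p^e}`
    (hLr : ∀ x : Lr, x ^ p ^ e ∈ (algebraMap L Lr).range) :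
    (∀ (ι : Type) (b : Module.Basis ι K Kr),
        LinearIndependent L (fun i : ι => algebraMap Kr Lr (b i)) ∧
        Submodule.span L (Set.range fun i : ι => algebraMap Kr Lr (b i)) = ⊤) ∧
    Function.Bijective
      (Algebra.TensorProduct.productMap (IsScalarTower.toAlgHom K Kr Lr)
        (IsScalarTower.toAlgHom K L Lr)) := by
  have : IsPurelyInseparable K Kr := (isPurelyInseparable_iff_pow_mem K p).2 fun x => ⟨e, hKr x⟩
  have hcompositum := span_range_algebraMap_eq_top_of_pow_mem p e hKr' hLr
  have hbasis (ι : Type) (b : Module.Basis ι K Kr) :=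
    And.intro (linearIndependent_algebraMap_comp_of_isPurelyInseparable_of_isSeparable
      (L := L) (Lr := Lr) b.linearIndependent)
      (Submodule.span_range_algebraMap_comp_eq_top b.span_eq hcompositum)
  refine ⟨hbasis, ?_⟩
  let b := Module.Free.chooseBasis K Kr
  exact Algebra.TensorProduct.productMap_bijective_of_basis b
    (.mk (hbasis _ b).1 (hbasis _ b).2.ge) _ fun i => Module.Basis.mk_apply ..

/-- Let `K ⊆ L` be a finite separable extension of `F`-finite fields of
characteristic `p > 0` and `e ≥ 1`.  Here `Kr` plays the role of `K^{1/p^e}` and `Lr` that of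
`L^{1/p^e}` (each characterized as the field of `p^e`-th roots of `K`, resp. `L`).
Then any basis of `K^{1/p^e}` over `K` is also a basis of `L^{1/p^e}` over `L`; equivalently,
the natural map `K^{1/p^e} ⊗_K L → L^{1/p^e}` is an isomorphism. -/
theorem basis_of_roots_stable_under_separable_extension
    (p : ℕ) [Fact p.Prime] (e : ℕ) (he : 1 ≤ e)
    (K L Kr Lr : Type) [Field K] [Field L] [Field Kr] [Field Lr]
    [Algebra K L] [Algebra K Kr] [Algebra L Lr] [Algebra Kr Lr] [Algebra K Lr]
    [IsScalarTower K L Lr] [IsScalarTower K Kr Lr]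
    [CharP K p]
    -- the extension `K ⊆ L` is finite and separable
    [FiniteDimensional K L] [Algebra.IsSeparable K L]
    -- `F`-finiteness of `K` and `L`
    [FiniteDimensional K Kr] [FiniteDimensional L Lr]
    -- `Kr = K^{1/p^e}`: every element of `Kr` is a `p^e`-th root of an element of `K`,
    -- and every element of `K` admits a `p^e`-th root in `Kr`
    (hKr : ∀ x : Kr, x ^ p ^ e ∈ (algebraMap K Kr).range)
    (hKr' : ∀ a : K, ∃ x : Kr, x ^ p ^ e = algebraMap K Kr a)
    -- `Lr = L^{1/p^e}`
    (hLr : ∀ x : Lr, x ^ p ^ e ∈ (algebraMap L Lr).range)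
    (hLr' : ∀ a : L, ∃ x : Lr, x ^ p ^ e = algebraMap L Lr a) :
    (∀ (ι : Type) (b : Module.Basis ι K Kr),
        LinearIndependent L (fun i : ι => algebraMap Kr Lr (b i)) ∧
        Submodule.span L (Set.range fun i : ι => algebraMap Kr Lr (b i)) = ⊤) ∧
    Function.Bijective
      (Algebra.TensorProduct.productMap (IsScalarTower.toAlgHom K Kr Lr)
        (IsScalarTower.toAlgHom K L Lr)) :=
  basis_of_roots_stable_under_separable_extension_general p e K L Kr Lr hKr hKr' hLr
end

section
/- Let K ⊆ L be a finite separable extension of F-finite fields of characteristic p > 0. Then every K-linear map φ : K^{1/p^e} → K extends uniquely to an L-linear map φ̄ : L^{1/p^e} → L (i.e., φ̄ restricted to K^{1/p^e} equals φ). -/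
/-!
Write `q = p ^ e`. Inside `Lr`, the purely inseparable extension `Kr / K` and the separable
extension `L / K` are linearly disjoint, and together they span `Lr` over `L`: under the Frobenius
`y ↦ y ^ q`, which identifies `Lr` with `L`, this reads `L = K · L ^ q`, true for separable `L / K`.
So `Lr = L ⊗_K Kr`, and the extension of `φ` is its base change `id_L ⊗ φ`.
-/

open Module

theorem isBaseChange_of_basis_of_linearIndependent {R S V W ι : Type*} [CommRing R] [CommRing S]
    [Algebra R S] [AddCommGroup V] [Module R V] [AddCommGroup W] [Module R W] [Module S W]
    [IsScalarTower R S W] (b : Basis ι R V) (f : V →ₗ[R] W)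
    (hli : LinearIndependent S (f ∘ b)) (hspan : Submodule.span S (Set.range f) = ⊤) :
    IsBaseChange S f := by
  have hspan' : ⊤ ≤ Submodule.span S (Set.range (f ∘ b)) := by
    rw [← hspan, Submodule.span_le]
    rintro - ⟨x, rfl⟩
    have hx : f x ∈ Submodule.span R (Set.range (f ∘ b)) := by
      rw [Set.range_comp, ← Submodule.map_span, b.span_eq]
      exact Submodule.mem_map_of_mem Submodule.mem_top
    exact Submodule.span_subset_span R S _ hx
  let B := Basis.mk hli hspan'
  have hf : Finsupp.linearCombination R B ∘ₗ b.repr.toLinearMap = f :=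
    b.ext fun i ↦ by simp [B]
  exact hf ▸ (IsBaseChange.of_basis R B).comp_equiv b.repr _

section RootFields

variable {K L Kr Lr : Type*} [Field K] [Field L] [Field Kr] [Field Lr]
  [Algebra K L] [Algebra K Kr] [Algebra L Lr] [Algebra Kr Lr] [Algebra K Lr]
  [IsScalarTower K L Lr] [IsScalarTower K Kr Lr] [Algebra.IsSeparable K L]

theorem linearIndependent_algebraMap_of_isPurelyInseparable [IsPurelyInseparable K Kr]
    {ι : Type*} {v : ι → Kr} (hv : LinearIndependent K v) :
    LinearIndependent L (algebraMap Kr Lr ∘ v) := by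
  let Lᵢ := (IsScalarTower.toAlgHom K L Lr).fieldRange
  have : Algebra.IsSeparable K Lᵢ :=
    AlgEquiv.Algebra.isSeparable (AlgEquiv.ofInjectiveField (IsScalarTower.toAlgHom K L Lr))
  have H := (Lᵢ.linearDisjoint_of_isPurelyInseparable_of_isSeparable Kr).symm'
  exact H.linearIndependent_left (hv.map' _
    (AlgEquiv.ofInjectiveField (IsScalarTower.toAlgHom K Kr Lr)).toLinearEquiv.ker)

variable (q : ℕ) [ExpChar K q] (n : ℕ)

theorem span_range_algebraMap_eq_top_of_isSeparable
    (hKr : ∀ a : K, ∃ x : Kr, x ^ q ^ n = algebraMap K Kr a)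
    (hLr : ∀ y : Lr, y ^ q ^ n ∈ (algebraMap L Lr).range) :
    Submodule.span L (Set.range (algebraMap Kr Lr)) = ⊤ := by
  have := expChar_of_injective_algebraMap (algebraMap K Lr).injective q
  choose root hroot using hKr
  refine eq_top_iff.mpr fun y _ ↦ ?_
  obtain ⟨c, hc⟩ := hLr y
  have hc_span : c ∈ Submodule.span K (Set.range fun l : L ↦ l ^ q ^ n) :=
    (Field.span_map_pow_expChar_pow_eq_top_of_isSeparable q n (v := id) (by simp)).ge trivial
  obtain ⟨a, rfl⟩ := Finsupp.mem_span_range_iff_exists_finsupp.mp hc_span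
  set z := ∑ l ∈ a.support, l • algebraMap Kr Lr (root (a l))
  have hz : iterateFrobenius Lr q n z = iterateFrobenius Lr q n y := by
    simp [iterateFrobenius_def, z, ← hc, Finsupp.sum, mul_pow, ← map_pow, hroot,
      Algebra.smul_def, ← IsScalarTower.algebraMap_apply, mul_comm]
  rw [← (iterateFrobenius Lr q n).injective hz]
  exact Submodule.sum_mem _ fun l _ ↦ Submodule.smul_mem _ _ (Submodule.subset_span ⟨_, rfl⟩)

theorem isBaseChange_of_isSeparable
    (hKr : ∀ x : Kr, x ^ q ^ n ∈ (algebraMap K Kr).range)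
    (hKr' : ∀ a : K, ∃ x : Kr, x ^ q ^ n = algebraMap K Kr a)
    (hLr : ∀ y : Lr, y ^ q ^ n ∈ (algebraMap L Lr).range) :
    IsBaseChange L (IsScalarTower.toAlgHom K Kr Lr).toLinearMap := by
  have : IsPurelyInseparable K Kr :=
    (isPurelyInseparable_iff_pow_mem K q).mpr fun x ↦ ⟨n, hKr x⟩
  let b := Basis.ofVectorSpace K Kr
  exact isBaseChange_of_basis_of_linearIndependent b _
    (linearIndependent_algebraMap_of_isPurelyInseparable b.linearIndependent)
    (span_range_algebraMap_eq_top_of_isSeparable q n hKr' hLr)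

end RootFields

theorem unique_extension_of_p_inverse_linear_map_general
    (p : ℕ) [Fact p.Prime] (e : ℕ)
    (K L Kr Lr : Type) [Field K] [Field L] [Field Kr] [Field Lr]
    [Algebra K L] [Algebra K Kr] [Algebra L Lr] [Algebra Kr Lr] [Algebra K Lr]
    [IsScalarTower K L Lr] [IsScalarTower K Kr Lr]
    [CharP K p]
    [Algebra.IsSeparable K L]
    (hKr : ∀ x : Kr, x ^ p ^ e ∈ (algebraMap K Kr).range)
    (hKr' : ∀ a : K, ∃ x : Kr, x ^ p ^ e = algebraMap K Kr a)
    (hLr : ∀ x : Lr, x ^ p ^ e ∈ (algebraMap L Lr).range)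
    (φ : Kr →ₗ[K] K) :
    ∃! φbar : Lr →ₗ[L] L,
      ∀ x : Kr, φbar (algebraMap Kr Lr x) = algebraMap K L (φ x) := by
  have h := isBaseChange_of_isSeparable p e hKr hKr' hLr
  refine ⟨h.lift (Algebra.linearMap K L ∘ₗ φ), fun x ↦ h.lift_eq _ x,
    fun ψ hψ ↦ h.algHom_ext _ _ fun x ↦ ?_⟩
  rw [h.lift_eq]
  exact hψ x

/-- Let `K ⊆ L` be a finite separable extension of `F`-finite fields of
characteristic `p > 0`.  With `Kr = K^{1/p^e}` and `Lr = L^{1/p^e}` the fields of `p^e`-th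
roots, every `K`-linear map `φ : K^{1/p^e} → K` extends uniquely to an `L`-linear map
`φ̄ : L^{1/p^e} → L`. -/
theorem unique_extension_of_p_inverse_linear_map
    (p : ℕ) [Fact p.Prime] (e : ℕ)
    (K L Kr Lr : Type) [Field K] [Field L] [Field Kr] [Field Lr]
    [Algebra K L] [Algebra K Kr] [Algebra L Lr] [Algebra Kr Lr] [Algebra K Lr]
    [IsScalarTower K L Lr] [IsScalarTower K Kr Lr]
    [CharP K p]
    [FiniteDimensional K L] [Algebra.IsSeparable K L]
    [FiniteDimensional K Kr] [FiniteDimensional L Lr]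
    (hKr : ∀ x : Kr, x ^ p ^ e ∈ (algebraMap K Kr).range)
    (hKr' : ∀ a : K, ∃ x : Kr, x ^ p ^ e = algebraMap K Kr a)
    (hLr : ∀ x : Lr, x ^ p ^ e ∈ (algebraMap L Lr).range)
    (hLr' : ∀ a : L, ∃ x : Lr, x ^ p ^ e = algebraMap L Lr a)
    (φ : Kr →ₗ[K] K) :
    ∃! φbar : Lr →ₗ[L] L,
      ∀ x : Kr, φbar (algebraMap Kr Lr x) = algebraMap K L (φ x) :=
  unique_extension_of_p_inverse_linear_map_general p e K L Kr Lr hKr hKr' hLr φ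
end

section
/- Let K ⊆ L be a finite separable extension of F-finite fields of characteristic p > 0, let φ : K^{1/p^e} → K be K-linear, and let φ̄ : L^{1/p^e} → L be its unique L-linear extension. Then the diagram commutes: Tr_{L/K} ∘ φ̄ = φ ∘ Tr_{L^{1/p^e}/K^{1/p^e}} as maps L^{1/p^e} → K. -/
/-!
The `p^e`-th power map gives ring isomorphisms `K^{1/p^e} ≃ K` and `L^{1/p^e} ≃ L` compatible
with the inclusions, so `L^{1/p^e}/K^{1/p^e}` is a copy of `L/K`. Transporting the trace along
them, `Tr_{L^{1/p^e}/K^{1/p^e}}(l) = Tr_{L/K}(l^{p^e})^{1/p^e} = Tr_{L/K}(l)` for `l ∈ L`, since the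
trace of a separable extension commutes with Frobenius. Separability also makes the `p^e`-th powers
of `L` span `L` over `K`, hence `L` spans `L^{1/p^e}` over `K^{1/p^e}`; on a product `k • l` both
sides of the identity equal `φ(k) · Tr_{L/K}(l)`.
-/

open Submodule Pointwise

theorem Algebra.trace_pow_expChar_pow {K L : Type*} [Field K] [Field L] [Algebra K L]
    [FiniteDimensional K L] [Algebra.IsSeparable K L] (p n : ℕ) [ExpChar K p] (x : L) :
    Algebra.trace K L (x ^ p ^ n) = Algebra.trace K L x ^ p ^ n := by
  have : ExpChar (AlgebraicClosure K) p :=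
    expChar_of_injective_algebraMap (algebraMap K (AlgebraicClosure K)).injective p
  apply (algebraMap K (AlgebraicClosure K)).injective
  simp only [map_pow, trace_eq_sum_embeddings, sum_pow_char_pow]

section FrobeniusPowEquiv

variable {F E : Type*} [Field F] [Field E] [Algebra F E] {p : ℕ} [ExpChar E p] {n : ℕ}
  (h : ∀ x : E, x ^ p ^ n ∈ (algebraMap F E).range)
  (h' : ∀ a : F, ∃ x : E, x ^ p ^ n = algebraMap F E a)

noncomputable def frobeniusPowEquiv : E ≃+* F :=
  (RingEquiv.ofBijective ((iterateFrobenius E p n).codRestrict _ h)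
      ⟨fun _ _ hxy ↦ (iterateFrobenius E p n).injective (congrArg Subtype.val hxy),
        fun ⟨_, a, ha⟩ ↦ (h' a).imp fun _ hx ↦ Subtype.ext (hx.trans ha)⟩).trans
    (RingEquiv.ofBijective (algebraMap F E).rangeRestrict
      ⟨fun _ _ hab ↦ (algebraMap F E).injective (congrArg Subtype.val hab),
        (algebraMap F E).rangeRestrict_surjective⟩).symm

@[simp]
theorem algebraMap_frobeniusPowEquiv (x : E) :
    algebraMap F E (frobeniusPowEquiv h h' x) = x ^ p ^ n := by
  unfold frobeniusPowEquiv
  rw [RingEquiv.trans_apply]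
  exact congrArg Subtype.val (RingEquiv.apply_symm_apply
    (RingEquiv.ofBijective (algebraMap F E).rangeRestrict _)
    ((iterateFrobenius E p n).codRestrict _ h x))

@[simp]
theorem frobeniusPowEquiv_algebraMap (a : F) :
    frobeniusPowEquiv h h' (algebraMap F E a) = a ^ p ^ n :=
  (algebraMap F E).injective (by simp)

theorem frobeniusPowEquiv_symm_pow (a : F) :
    (frobeniusPowEquiv h h').symm (a ^ p ^ n) = algebraMap F E a := by
  rw [RingEquiv.symm_apply_eq, frobeniusPowEquiv_algebraMap]

end FrobeniusPowEquiv

section Tower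

variable {p n : ℕ} {K L Kr Lr : Type*} [Field K] [Field L] [Field Kr] [Field Lr]
  [Algebra K L] [Algebra K Kr] [Algebra L Lr] [Algebra Kr Lr] [Algebra K Lr]
  [IsScalarTower K L Lr] [IsScalarTower K Kr Lr] [ExpChar Kr p] [ExpChar Lr p]
  (hK : ∀ x : Kr, x ^ p ^ n ∈ (algebraMap K Kr).range)
  (hK' : ∀ a : K, ∃ x : Kr, x ^ p ^ n = algebraMap K Kr a)
  (hL : ∀ x : Lr, x ^ p ^ n ∈ (algebraMap L Lr).range)
  (hL' : ∀ a : L, ∃ x : Lr, x ^ p ^ n = algebraMap L Lr a)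

theorem algebraMap_comp_frobeniusPowEquiv :
    (algebraMap K L).comp (frobeniusPowEquiv hK hK' : Kr →+* K) =
      (frobeniusPowEquiv hL hL' : Lr →+* L).comp (algebraMap Kr Lr) := by
  ext k
  apply (algebraMap L Lr).injective
  simp only [RingHom.coe_comp, RingHom.coe_coe, Function.comp_apply,
    ← IsScalarTower.algebraMap_apply, algebraMap_frobeniusPowEquiv]
  rw [IsScalarTower.algebraMap_apply K Kr Lr, algebraMap_frobeniusPowEquiv, map_pow]

theorem frobeniusPowEquiv_symm_algebraMap (a : K) :
    (frobeniusPowEquiv hL hL').symm (algebraMap K L a) =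
      algebraMap Kr Lr ((frobeniusPowEquiv hK hK').symm a) := by
  rw [RingEquiv.symm_apply_eq]
  simpa using RingHom.congr_fun (algebraMap_comp_frobeniusPowEquiv hK hK' hL hL')
    ((frobeniusPowEquiv hK hK').symm a)

include hK hK' hL hL'

theorem trace_algebraMap_of_frobeniusPowEquiv [FiniteDimensional K L] [Algebra.IsSeparable K L]
    [ExpChar K p] (l : L) :
    Algebra.trace Kr Lr (algebraMap L Lr l) = algebraMap K Kr (Algebra.trace K L l) := by
  rw [Algebra.trace_eq_of_equiv_equiv _ _ (algebraMap_comp_frobeniusPowEquiv hK hK' hL hL'),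
    frobeniusPowEquiv_algebraMap, Algebra.trace_pow_expChar_pow, frobeniusPowEquiv_symm_pow]

theorem span_range_algebraMap_of_frobeniusPowEquiv [Algebra.IsSeparable K L] [ExpChar K p] :
    span Kr (Set.range (algebraMap L Lr)) = ⊤ := by
  refine eq_top_iff'.mpr fun X ↦ ?_
  suffices ∀ y, (frobeniusPowEquiv hL hL').symm y ∈ span Kr (Set.range (algebraMap L Lr)) by
    simpa using this (frobeniusPowEquiv hL hL' X)
  intro y
  have hspan : span K (Set.range (· ^ p ^ n : L → L)) = ⊤ := by
    simpa using Field.span_map_pow_expChar_pow_eq_top_of_isSeparable p n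
      (v := (id : L → L)) (by simp)
  induction (eq_top_iff'.mp hspan) y using span_induction with
  | mem _ hy =>
    obtain ⟨l, rfl⟩ := hy
    exact subset_span ⟨l, (frobeniusPowEquiv_symm_pow hL hL' l).symm⟩
  | zero => simp
  | add _ _ _ _ hx hy => simpa using add_mem hx hy
  | smul a _ _ hx =>
    rw [Algebra.smul_def, map_mul, frobeniusPowEquiv_symm_algebraMap hK hK', ← Algebra.smul_def]
    exact smul_mem _ _ hx

end Tower

theorem trace_extension_smul_algebraMap {K L Kr Lr : Type*} [CommRing K] [CommRing L]
    [CommRing Kr] [CommRing Lr] [Algebra K L] [Algebra K Kr] [Algebra L Lr] [Algebra Kr Lr]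
    (φ : Kr →ₗ[K] K) (φbar : Lr →ₗ[L] L)
    (hext : ∀ x : Kr, φbar (algebraMap Kr Lr x) = algebraMap K L (φ x))
    (htrace : ∀ l : L,
      Algebra.trace Kr Lr (algebraMap L Lr l) = algebraMap K Kr (Algebra.trace K L l))
    (k : Kr) (l : L) :
    Algebra.trace K L (φbar (k • algebraMap L Lr l)) =
      φ (Algebra.trace Kr Lr (k • algebraMap L Lr l)) := by
  have hφbar : φbar (k • algebraMap L Lr l) = φ k • l := by
    rw [Algebra.smul_def, mul_comm, ← Algebra.smul_def, map_smul, hext, smul_eq_mul, mul_comm,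
      ← Algebra.smul_def]
  rw [hφbar, map_smul, map_smul, htrace, smul_eq_mul, smul_eq_mul, mul_comm k,
    ← Algebra.smul_def, map_smul, smul_eq_mul, mul_comm]

theorem trace_commutes_with_extension_general
    (p : ℕ) [Fact p.Prime] (e : ℕ)
    (K L Kr Lr : Type) [Field K] [Field L] [Field Kr] [Field Lr]
    [Algebra K L] [Algebra K Kr] [Algebra L Lr] [Algebra Kr Lr] [Algebra K Lr]
    [IsScalarTower K L Lr] [IsScalarTower K Kr Lr]
    [CharP K p]
    [FiniteDimensional K L] [Algebra.IsSeparable K L]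
    (hKr : ∀ x : Kr, x ^ p ^ e ∈ (algebraMap K Kr).range)
    (hKr' : ∀ a : K, ∃ x : Kr, x ^ p ^ e = algebraMap K Kr a)
    (hLr : ∀ x : Lr, x ^ p ^ e ∈ (algebraMap L Lr).range)
    (hLr' : ∀ a : L, ∃ x : Lr, x ^ p ^ e = algebraMap L Lr a)
    (φ : Kr →ₗ[K] K) (φbar : Lr →ₗ[L] L)
    (hext : ∀ x : Kr, φbar (algebraMap Kr Lr x) = algebraMap K L (φ x)) :
    ∀ X : Lr, Algebra.trace K L (φbar X) = φ (Algebra.trace Kr Lr X) := by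
  have : ExpChar Kr p := expChar_of_injective_algebraMap (algebraMap K Kr).injective p
  have : ExpChar Lr p := expChar_of_injective_algebraMap (algebraMap K Lr).injective p
  have hspan : span K ((Set.univ : Set Kr) • Set.range (algebraMap L Lr)) = ⊤ := by
    rw [span_smul_of_span_eq_top span_univ,
      span_range_algebraMap_of_frobeniusPowEquiv hKr hKr' hLr hLr', restrictScalars_top]
  have hmaps : (Algebra.trace K L).comp (φbar.restrictScalars K) =
      φ.comp ((Algebra.trace Kr Lr).restrictScalars K) := by
    refine LinearMap.ext_on hspan ?_
    rintro _ ⟨k, -, _, ⟨l, rfl⟩, rfl⟩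
    exact trace_extension_smul_algebraMap φ φbar hext
      (trace_algebraMap_of_frobeniusPowEquiv hKr hKr' hLr hLr') k l
  exact LinearMap.congr_fun hmaps

/-- Let `K ⊆ L` be a finite separable extension of `F`-finite fields of
characteristic `p > 0`, with `Kr = K^{1/p^e} ⊆ Lr = L^{1/p^e}` the fields of `p^e`-th roots.
If `φ : K^{1/p^e} → K` is `K`-linear with (unique) `L`-linear extension
`φ̄ : L^{1/p^e} → L`, then `Tr_{L/K} ∘ φ̄ = φ ∘ Tr_{L^{1/p^e}/K^{1/p^e}}`. -/
theorem trace_commutes_with_extension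
    (p : ℕ) [Fact p.Prime] (e : ℕ)
    (K L Kr Lr : Type) [Field K] [Field L] [Field Kr] [Field Lr]
    [Algebra K L] [Algebra K Kr] [Algebra L Lr] [Algebra Kr Lr] [Algebra K Lr]
    [IsScalarTower K L Lr] [IsScalarTower K Kr Lr]
    [CharP K p]
    [FiniteDimensional K L] [Algebra.IsSeparable K L]
    [FiniteDimensional K Kr] [FiniteDimensional L Lr]
    (hKr : ∀ x : Kr, x ^ p ^ e ∈ (algebraMap K Kr).range)
    (hKr' : ∀ a : K, ∃ x : Kr, x ^ p ^ e = algebraMap K Kr a)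
    (hLr : ∀ x : Lr, x ^ p ^ e ∈ (algebraMap L Lr).range)
    (hLr' : ∀ a : L, ∃ x : Lr, x ^ p ^ e = algebraMap L Lr a)
    (φ : Kr →ₗ[K] K) (φbar : Lr →ₗ[L] L)
    (hext : ∀ x : Kr, φbar (algebraMap Kr Lr x) = algebraMap K L (φ x)) :
    ∀ X : Lr, Algebra.trace K L (φbar X) = φ (Algebra.trace Kr Lr X) :=
  trace_commutes_with_extension_general p e K L Kr Lr hKr hKr' hLr hLr' φ φbar hext
end

section
/- Let K ⊆ L be a finite extension of fields of characteristic p > 0 with L containing an element that is purely inseparable of degree p over K (i.e., there exists x ∈ K with x^{1/p} ∈ L \ K). Then the only K-linear map φ : K^{1/p^e} → K that extends to an L-linear map φ̄ : L^{1/p^e} → L is the zero map. -/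
/-!
If `y ∈ L \ K` has `y ^ p ∈ K` and `r ∈ K^{1/p^e}`, then `(y r) ^ p^e = (y ^ p) ^ p^(e-1) r ^ p^e`
lies in `K`, so `y r` is the unique `p^e`-th root of an element of `K` and hence lies in
`K^{1/p^e}`. An `L`-linear extension `φ̄` of `φ` therefore gives
`y φ(r) = φ̄(y r) = φ(y r) ∈ K`, which forces `φ(r) = 0` because `y ∉ K`.
-/

theorem mul_pow_pow_mem_of_pow_mem {M S : Type*} [CommMonoid M] [SetLike S M] [SubmonoidClass S M]
    {s : S} {p e : ℕ} (he : 1 ≤ e) {a b : M} (ha : a ^ p ∈ s) (hb : b ^ p ^ e ∈ s) :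
    (a * b) ^ p ^ e ∈ s := by
  obtain ⟨d, rfl⟩ := Nat.exists_eq_add_of_le' he
  rw [mul_pow, pow_succ', pow_mul]
  exact mul_mem (pow_mem ha _) (pow_succ' p d ▸ hb)

theorem mem_range_of_pow_mem_range {K R A : Type*} [CommSemiring K] [CommSemiring R]
    [CommRing A] [IsReduced A] [Algebra K R] [Algebra K A] [Algebra R A] [IsScalarTower K R A]
    {p : ℕ} [ExpChar A p] {e : ℕ} (hroots : ∀ a : K, ∃ x : R, x ^ p ^ e = algebraMap K R a)
    {w : A} (hw : w ^ p ^ e ∈ (algebraMap K A).rangeS) : w ∈ (algebraMap R A).rangeS := by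
  obtain ⟨a, ha⟩ := hw
  obtain ⟨x, hx⟩ := hroots a
  refine ⟨x, iterateFrobenius_inj A p e ?_⟩
  rw [iterateFrobenius_def, iterateFrobenius_def, ← map_pow, hx,
    ← IsScalarTower.algebraMap_apply, ha]

theorem only_zero_extends_purely_inseparable_general
    (p : ℕ) [Fact p.Prime] (e : ℕ) (he : 1 ≤ e)
    (K L Kr Lr : Type) [Field K] [Field L] [Field Kr] [Field Lr]
    [Algebra K L] [Algebra K Kr] [Algebra L Lr] [Algebra Kr Lr] [Algebra K Lr]
    [IsScalarTower K L Lr] [IsScalarTower K Kr Lr]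
    [CharP K p]
    (hins : ∃ y : L, y ∉ (algebraMap K L).range ∧ y ^ p ∈ (algebraMap K L).range)
    (hKr : ∀ x : Kr, x ^ p ^ e ∈ (algebraMap K Kr).range)
    (hKr' : ∀ a : K, ∃ x : Kr, x ^ p ^ e = algebraMap K Kr a)
    (φ : Kr →ₗ[K] K)
    (hext : ∃ φbar : Lr →ₗ[L] L,
      ∀ x : Kr, φbar (algebraMap Kr Lr x) = algebraMap K L (φ x)) :
    φ = 0 := by
  obtain ⟨y, hyK, c, hc⟩ := hins
  obtain ⟨φbar, hφbar⟩ := hext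
  have : ExpChar Lr p := expChar_of_injective_algebraMap (algebraMap K Lr).injective p
  ext r
  by_contra hr
  obtain ⟨z, hz⟩ := hKr r
  have hyr : algebraMap L Lr y * algebraMap Kr Lr r ∈ (algebraMap Kr Lr).rangeS := by
    refine mem_range_of_pow_mem_range hKr' (mul_pow_pow_mem_of_pow_mem he ?_ ?_)
    · exact ⟨c, by rw [IsScalarTower.algebraMap_apply K L Lr, hc, map_pow]⟩
    · exact ⟨z, by rw [IsScalarTower.algebraMap_apply K Kr Lr, hz, map_pow]⟩
  obtain ⟨s, hs⟩ := hyr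
  have hφs : algebraMap K L (φ s) = y * algebraMap K L (φ r) := by
    rw [← hφbar, hs, ← Algebra.smul_def, map_smul, hφbar, smul_eq_mul]
  refine hyK ⟨φ s / φ r, ?_⟩
  rw [map_div₀, hφs, mul_div_cancel_right₀ _ ((map_ne_zero _).mpr hr)]

/-- Let `K ⊆ L` be a finite extension of fields of characteristic `p > 0`
such that `L` contains an element which is purely inseparable of degree `p` over `K`
(i.e. there is `y ∈ L \ K` with `y^p ∈ K`).  With `Kr = K^{1/p^e} ⊆ Lr = L^{1/p^e}`
(`e ≥ 1`) the fields of `p^e`-th roots, the only `K`-linear map `φ : K^{1/p^e} → K`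
extending to an `L`-linear map `φ̄ : L^{1/p^e} → L` is the zero map. -/
theorem only_zero_extends_purely_inseparable
    (p : ℕ) [Fact p.Prime] (e : ℕ) (he : 1 ≤ e)
    (K L Kr Lr : Type) [Field K] [Field L] [Field Kr] [Field Lr]
    [Algebra K L] [Algebra K Kr] [Algebra L Lr] [Algebra Kr Lr] [Algebra K Lr]
    [IsScalarTower K L Lr] [IsScalarTower K Kr Lr]
    [CharP K p]
    [FiniteDimensional K L]
    (hins : ∃ y : L, y ∉ (algebraMap K L).range ∧ y ^ p ∈ (algebraMap K L).range)
    (hKr : ∀ x : Kr, x ^ p ^ e ∈ (algebraMap K Kr).range)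
    (hKr' : ∀ a : K, ∃ x : Kr, x ^ p ^ e = algebraMap K Kr a)
    (hLr : ∀ x : Lr, x ^ p ^ e ∈ (algebraMap L Lr).range)
    (hLr' : ∀ a : L, ∃ x : Lr, x ^ p ^ e = algebraMap L Lr a)
    (φ : Kr →ₗ[K] K)
    (hext : ∃ φbar : Lr →ₗ[L] L,
      ∀ x : Kr, φbar (algebraMap Kr Lr x) = algebraMap K L (φ x)) :
    φ = 0 :=
  only_zero_extends_purely_inseparable_general p e he K L Kr Lr hins hKr hKr' φ hext
end

section
/- Let K ⊆ L be a finite inseparable extension of F-finite fields of characteristic p > 0. Then the only K-linear map φ : K^{1/p^e} → K that extends to an L-linear map φ̄ : L^{1/p^e} → L is the zero map. -/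
/-!
Let `K'` be the separable closure of `K` in `L`. Since `L/K'` is purely inseparable and nontrivial,
there is `b ∉ K'` with `c = b ^ p ∈ K'`. As `c` is separable over `K`, it lies in `K[c ^ p ^ e]`;
writing `c = ∑ aᵢ (cⁱ) ^ p ^ e` and using that Frobenius is additive, `c` has a `p ^ e`-th root `w`
in the compositum `K' · K^{1/p^e} ⊆ L^{1/p^e}`. An `L`-linear extension `φ̄` of `φ` maps this
compositum into `K'`, since `φ̄ (k z) = k φ z`. Hence `b φ y = φ̄ (w ^ p ^ (e - 1) y) ∈ K'` for
all `y`, which forces `φ y = 0` because `b ∉ K'`.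
-/

open IntermediateField

theorem exists_notMem_pow_mem_of_pow_pow_mem {M : Type*} [Monoid M] {S : Set M} {p : ℕ} {x : M}
    (hx : x ∉ S) {n : ℕ} (hn : x ^ p ^ n ∈ S) : ∃ b ∉ S, b ^ p ∈ S := by
  induction n generalizing x with
  | zero => exact absurd (by simpa using hn) hx
  | succ n ih =>
    by_cases hxp : x ^ p ∈ S
    · exact ⟨x, hx, hxp⟩
    · exact ih hxp (by rwa [← pow_mul, ← pow_succ'])

theorem exists_notMem_separableClosure_pow_mem {K L : Type*} [Field K] [Field L] [Algebra K L]
    [Algebra.IsAlgebraic K L] (p : ℕ) [ExpChar K p] (h : ¬Algebra.IsSeparable K L) :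
    ∃ b ∉ separableClosure K L, b ^ p ∈ separableClosure K L := by
  have := expChar_of_injective_algebraMap (algebraMap K (separableClosure K L)).injective p
  obtain ⟨x, hx⟩ := SetLike.exists_not_mem_of_ne_top (separableClosure K L)
    (mt (separableClosure.eq_top_iff K L).1 h)
  obtain ⟨n, z, hz⟩ := IsPurelyInseparable.pow_mem (separableClosure K L) p x
  exact exists_notMem_pow_mem_of_pow_pow_mem (S := (separableClosure K L : Set L)) hx
    (hz ▸ z.2 : x ^ p ^ n ∈ separableClosure K L)

theorem IsSeparable.mem_algebra_adjoin_pow_expChar_pow {K L : Type*} [Field K] [Field L]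
    [Algebra K L] (p : ℕ) [ExpChar K p] (e : ℕ) {c : L} (hc : IsSeparable K c) :
    c ∈ Algebra.adjoin K {c ^ p ^ e} := by
  rw [← adjoin_simple_toSubalgebra_of_isAlgebraic (hc.isIntegral.pow _).isAlgebraic,
    mem_toSubalgebra, ← adjoin_simple_eq_adjoin_pow_expChar_pow_of_isSeparable K L hc p e]
  exact mem_adjoin_simple_self K c

section Compositum

variable {K L Kr Lr : Type*} [CommRing K] [CommRing L] [CommRing Kr] [CommRing Lr]
  [Algebra K L] [Algebra K Kr] [Algebra L Lr] [Algebra Kr Lr] [Algebra K Lr]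
  [IsScalarTower K L Lr] [IsScalarTower K Kr Lr]

variable (Kr) in
/-- The compositum `E · K^{1/p^e}` inside `L^{1/p^e}`; for `E = K'` it is the paper's
`K'^{1/p^e}`. -/
def rootCompositum (E : Subalgebra K L) : Subalgebra K Lr :=
  E.map (IsScalarTower.toAlgHom K L Lr) ⊔ (IsScalarTower.toAlgHom K Kr Lr).range

theorem algebraMap_mem_rootCompositum_of_mem {E : Subalgebra K L} {k : L} (hk : k ∈ E) :
    algebraMap L Lr k ∈ rootCompositum Kr E :=
  Algebra.mem_sup_left ⟨k, hk, rfl⟩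

theorem algebraMap_mem_rootCompositum (E : Subalgebra K L) (z : Kr) :
    algebraMap Kr Lr z ∈ rootCompositum Kr E :=
  Algebra.mem_sup_right ⟨z, rfl⟩

theorem map_mem_of_mem_rootCompositum {E : Subalgebra K L} (φbar : Lr →ₗ[L] L)
    (hφbar : ∀ z : Kr, φbar (algebraMap Kr Lr z) ∈ E) {x : Lr} (hx : x ∈ rootCompositum Kr E) :
    φbar x ∈ E := by
  rw [rootCompositum, ← Subalgebra.mem_toSubmodule, ← Subalgebra.mul_toSubmodule] at hx
  induction hx using Submodule.mul_induction_on' with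
  | mem_mul_mem s hs t ht =>
    obtain ⟨k, hk, rfl⟩ := hs
    obtain ⟨z, rfl⟩ := ht
    change φbar (algebraMap L Lr k * algebraMap Kr Lr z) ∈ E
    rw [← Algebra.smul_def, map_smul, smul_eq_mul]
    exact mul_mem hk (hφbar z)
  | add _ _ _ _ hx hy => exact (map_add φbar _ _).symm ▸ add_mem hx hy

theorem exists_pow_eq_algebraMap_of_mem_adjoin (p e : ℕ) [ExpChar Lr p] {E : Subalgebra K L}
    (hKr : ∀ a : K, ∃ u : Kr, u ^ p ^ e = algebraMap K Kr a) {t : L} (ht : t ∈ E) {x : L}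
    (hx : x ∈ Algebra.adjoin K {t ^ p ^ e}) :
    ∃ w ∈ rootCompositum Kr E, w ^ p ^ e = algebraMap L Lr x := by
  induction hx using Algebra.adjoin_induction with
  | mem y hy =>
    rw [Set.mem_singleton_iff.1 hy]
    exact ⟨algebraMap L Lr t, algebraMap_mem_rootCompositum_of_mem ht, (map_pow _ _ _).symm⟩
  | algebraMap a =>
    obtain ⟨u, hu⟩ := hKr a
    refine ⟨algebraMap Kr Lr u, algebraMap_mem_rootCompositum E u, ?_⟩
    rw [← map_pow, hu, ← IsScalarTower.algebraMap_apply, ← IsScalarTower.algebraMap_apply]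
  | add y z _ _ hy hz =>
    obtain ⟨v, hv, hvy⟩ := hy
    obtain ⟨w, hw, hwz⟩ := hz
    exact ⟨v + w, add_mem hv hw, by rw [add_pow_expChar_pow, hvy, hwz, map_add]⟩
  | mul y z _ _ hy hz =>
    obtain ⟨v, hv, hvy⟩ := hy
    obtain ⟨w, hw, hwz⟩ := hz
    exact ⟨v * w, mul_mem hv hw, by rw [mul_pow, hvy, hwz, map_mul]⟩

end Compositum

theorem only_zero_extends_inseparable_general
    (p : ℕ) [Fact p.Prime] (e : ℕ) (he : 1 ≤ e)
    (K L Kr Lr : Type) [Field K] [Field L] [Field Kr] [Field Lr]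
    [Algebra K L] [Algebra K Kr] [Algebra L Lr] [Algebra Kr Lr] [Algebra K Lr]
    [IsScalarTower K L Lr] [IsScalarTower K Kr Lr]
    [CharP K p]
    [FiniteDimensional K L]
    (hnotsep : ¬ Algebra.IsSeparable K L)
    (hKr' : ∀ a : K, ∃ x : Kr, x ^ p ^ e = algebraMap K Kr a)
    (φ : Kr →ₗ[K] K)
    (hext : ∃ φbar : Lr →ₗ[L] L,
      ∀ x : Kr, φbar (algebraMap Kr Lr x) = algebraMap K L (φ x)) :
    φ = 0 := by
  obtain ⟨φbar, hφbar⟩ := hext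
  have : CharP Lr p := charP_of_injective_algebraMap (algebraMap K Lr).injective p
  set E := separableClosure K L
  obtain ⟨b, hbE, hbp⟩ := exists_notMem_separableClosure_pow_mem p hnotsep
  have hadj := (mem_separableClosure_iff.1 hbp).mem_algebra_adjoin_pow_expChar_pow p e
  obtain ⟨w, hw, hwb⟩ :=
    exists_pow_eq_algebraMap_of_mem_adjoin (Lr := Lr) (E := E.toSubalgebra) p e hKr' hbp hadj
  have hwb' : w ^ p ^ (e - 1) = algebraMap L Lr b := frobenius_inj Lr p <| by
    rw [frobenius_def, frobenius_def, ← pow_mul, ← pow_succ, Nat.sub_add_cancel he, hwb, map_pow]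
  ext y
  rw [LinearMap.zero_apply]
  have hbφ : b * algebraMap K L (φ y) ∈ E := by
    have := map_mem_of_mem_rootCompositum φbar (fun z => hφbar z ▸ E.algebraMap_mem (φ z))
      (mul_mem (pow_mem hw (p ^ (e - 1))) (algebraMap_mem_rootCompositum _ y))
    rwa [hwb', ← Algebra.smul_def, map_smul, hφbar, smul_eq_mul] at this
  by_contra hy
  refine hbE ?_
  rw [← mul_inv_cancel_right₀ ((map_ne_zero (algebraMap K L)).2 hy) b]
  exact mul_mem hbφ (inv_mem (E.algebraMap_mem (φ y)))

/-- Let `K ⊆ L` be a finite inseparable extension of `F`-finite fields of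
characteristic `p > 0`, and let `Kr = K^{1/p^e} ⊆ Lr = L^{1/p^e}` (`e ≥ 1`) be the fields of
`p^e`-th roots.  Then the only `K`-linear map `φ : K^{1/p^e} → K` that extends to an
`L`-linear map `φ̄ : L^{1/p^e} → L` is the zero map. -/
theorem only_zero_extends_inseparable
    (p : ℕ) [Fact p.Prime] (e : ℕ) (he : 1 ≤ e)
    (K L Kr Lr : Type) [Field K] [Field L] [Field Kr] [Field Lr]
    [Algebra K L] [Algebra K Kr] [Algebra L Lr] [Algebra Kr Lr] [Algebra K Lr]
    [IsScalarTower K L Lr] [IsScalarTower K Kr Lr]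
    [CharP K p]
    [FiniteDimensional K L]
    (hnotsep : ¬ Algebra.IsSeparable K L)
    [FiniteDimensional K Kr] [FiniteDimensional L Lr]
    (hKr : ∀ x : Kr, x ^ p ^ e ∈ (algebraMap K Kr).range)
    (hKr' : ∀ a : K, ∃ x : Kr, x ^ p ^ e = algebraMap K Kr a)
    (hLr : ∀ x : Lr, x ^ p ^ e ∈ (algebraMap L Lr).range)
    (hLr' : ∀ a : L, ∃ x : Lr, x ^ p ^ e = algebraMap L Lr a)
    (φ : Kr →ₗ[K] K)
    (hext : ∃ φbar : Lr →ₗ[L] L,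
      ∀ x : Kr, φbar (algebraMap Kr Lr x) = algebraMap K L (φ x)) :
    φ = 0 :=
  only_zero_extends_inseparable_general p e he K L Kr Lr hnotsep hKr' φ hext
end

section
/- Let K ⊆ L be a finite extension of fields of characteristic p > 0, let T : L → K be a non-zero K-linear map, and let φ : K^{1/p^e} → K be a K-linear map. Then there exists a unique L-linear map φ_T : L^{1/p^e} → L satisfying T ∘ φ_T = φ ∘ T^{1/p^e}, where T^{1/p^e} : L^{1/p^e} → K^{1/p^e} is the p^e-th root of T (the T-transpose of φ). -/
/-!
For a nonzero `K`-linear `T : L → K` and a finite-dimensional `L`-vector space `V`, composing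
with `T` is a `K`-linear map `Hom_L(V, L) → Hom_K(V, K)`. It is injective because a nonzero
`L`-linear functional is onto `L`, and both sides have `K`-dimension `[V : L] [L : K]`, so it is
bijective. The transpose `φ_T` is the preimage of `φ ∘ T^{1/p^e}` for `V = L^{1/p^e}`.
-/

section TransposeAlongFunctional

variable {K L V : Type*} [Field K] [Field L] [Algebra K L]
  [AddCommGroup V] [Module L V] [Module K V] [IsScalarTower K L V]

variable (V) in
def LinearMap.compFunctional (T : L →ₗ[K] K) : (V →ₗ[L] L) →ₗ[K] (V →ₗ[K] K) :=
  compRight K T ∘ₗ restrictScalarsₗ K L V L K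

@[simp]
theorem LinearMap.compFunctional_apply (T : L →ₗ[K] K) (f : V →ₗ[L] L) (x : V) :
    compFunctional V T f x = T (f x) := rfl

theorem LinearMap.compFunctional_injective {T : L →ₗ[K] K} (hT : T ≠ 0) :
    Function.Injective (compFunctional V T) := by
  refine (injective_iff_map_eq_zero _).2 fun f hf => ?_
  by_contra hf0
  obtain ⟨x, hx⟩ : ∃ x, f x ≠ 0 := by simpa [LinearMap.ext_iff] using hf0
  refine hT (LinearMap.ext fun c => ?_)
  simpa [div_mul_cancel₀ _ hx] using LinearMap.congr_fun hf ((c / f x) • x)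

variable [FiniteDimensional K L] [FiniteDimensional L V]

theorem LinearMap.finrank_linearMap_self_restrictScalars :
    Module.finrank K (V →ₗ[L] L) = Module.finrank K (V →ₗ[K] K) := by
  have : Module.Finite K V := .trans L V
  rw [← Module.finrank_mul_finrank K L, Module.finrank_linearMap_self,
    Module.finrank_linearMap_self, Module.finrank_mul_finrank]

theorem LinearMap.compFunctional_bijective {T : L →ₗ[K] K} (hT : T ≠ 0) :
    Function.Bijective (compFunctional V T) := by
  have : Module.Finite K V := .trans L V
  have : Module.Finite K (V →ₗ[L] L) := .trans L _
  refine ⟨compFunctional_injective hT, ?_⟩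
  exact (injective_iff_surjective_of_finrank_eq_finrank
    finrank_linearMap_self_restrictScalars).1 (compFunctional_injective hT)

end TransposeAlongFunctional

theorem exists_unique_transpose_general
    (K L Kr Lr : Type) [Field K] [Field L] [Field Kr] [Field Lr]
    [Algebra K L] [Algebra K Kr] [Algebra L Lr] [Algebra Kr Lr] [Algebra K Lr]
    [IsScalarTower K L Lr] [IsScalarTower K Kr Lr]
    [FiniteDimensional K L]
    [FiniteDimensional L Lr]
    (T : L →ₗ[K] K) (hT : T ≠ 0)
    (Troot : Lr →ₗ[Kr] Kr)
    (φ : Kr →ₗ[K] K) :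
    ∃! φT : Lr →ₗ[L] L, ∀ X : Lr, T (φT X) = φ (Troot X) := by
  simpa [LinearMap.ext_iff] using
    (LinearMap.compFunctional_bijective (V := Lr) hT).existsUnique (φ ∘ₗ Troot.restrictScalars K)

/-- Let `K ⊆ L` be a finite extension of (`F`-finite) fields of
characteristic `p > 0`, `T : L → K` a non-zero `K`-linear map, and `φ : K^{1/p^e} → K` a
`K`-linear map.  Here `Kr = K^{1/p^e} ⊆ Lr = L^{1/p^e}` are the fields of `p^e`-th roots and
`Troot : Lr → Kr` is the `p^e`-th root of `T`, characterized by
`Troot(x^{1/p^e}) = (T x)^{1/p^e}`.  Then there is a unique `L`-linear map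
`φ_T : L^{1/p^e} → L` (the `T`-transpose of `φ`) with `T ∘ φ_T = φ ∘ T^{1/p^e}`. -/
theorem exists_unique_transpose
    (p : ℕ) [Fact p.Prime] (e : ℕ)
    (K L Kr Lr : Type) [Field K] [Field L] [Field Kr] [Field Lr]
    [Algebra K L] [Algebra K Kr] [Algebra L Lr] [Algebra Kr Lr] [Algebra K Lr]
    [IsScalarTower K L Lr] [IsScalarTower K Kr Lr]
    [CharP K p]
    [FiniteDimensional K L]
    [FiniteDimensional K Kr] [FiniteDimensional L Lr]
    (hKr : ∀ x : Kr, x ^ p ^ e ∈ (algebraMap K Kr).range)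
    (hKr' : ∀ a : K, ∃ x : Kr, x ^ p ^ e = algebraMap K Kr a)
    (hLr : ∀ x : Lr, x ^ p ^ e ∈ (algebraMap L Lr).range)
    (hLr' : ∀ a : L, ∃ x : Lr, x ^ p ^ e = algebraMap L Lr a)
    (T : L →ₗ[K] K) (hT : T ≠ 0)
    (Troot : Lr →ₗ[Kr] Kr)
    (hTroot : ∀ (x : L) (X : Lr),
      X ^ p ^ e = algebraMap L Lr x → (Troot X) ^ p ^ e = algebraMap K Kr (T x))
    (φ : Kr →ₗ[K] K) :
    ∃! φT : Lr →ₗ[L] L, ∀ X : Lr, T (φT X) = φ (Troot X) :=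
  exists_unique_transpose_general K L Kr Lr T hT Troot φ
end

section
/- Let R ⊆ S be a module-finite inclusion of domains with fraction fields K ⊆ L. Suppose Φ ∈ Hom_K(L, K) satisfies Φ(S) ⊆ R and that Φ restricted to S generates Hom_R(S, R) as an S-module. If x ∈ L satisfies Φ(x·S) ⊆ R, then x ∈ S. -/
/-!
Writing the `R`-linear map `a ↦ Φ (x a)` on `S` as `Φ (s · −)|_S` gives `Φ ((x - s) S) = 0`.
As `S` spans `L` over `K` and multiplication by a nonzero element of `L` is bijective, this
forces `Φ = 0` unless `x = s`. But `Φ ≠ 0`, since `Φ|_S` generates `Hom_R(S, R)`, which is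
nonzero: clearing the denominators of a nonzero `K`-linear functional on `L` on finitely
many generators of `S` yields a nonzero `R`-linear map `S → R`.
-/

open Submodule

-- The `K`-subalgebra generated by `S` is algebraic over `K`, hence a field, hence all of `L`.
theorem span_range_algebraMap_eq_top (S K L : Type*) [CommRing S] [Field K] [Field L]
    [Algebra S L] [IsFractionRing S L] [Algebra K L] [Algebra.IsAlgebraic K L] :
    span K (Set.range (algebraMap S L)) = ⊤ := by
  have hfield : IntermediateField.adjoin K (Set.range (algebraMap S L)) = ⊤ := by
    rw [← IntermediateField.toSubfield_inj, IntermediateField.top_toSubfield, eq_top_iff,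
      ← IsFractionRing.closure_range_algebraMap S L]
    exact Subfield.closure_le.mpr (IntermediateField.subset_adjoin K _)
  have hmonoid : (Submonoid.closure (Set.range (algebraMap S L)) : Set L) ⊆
      span K (Set.range (algebraMap S L)) :=
    fun x hx ↦ subset_span <|
      Submonoid.closure_le (S := MonoidHom.mrange (algebraMap S L : S →* L)).mpr (fun _ h ↦ h) hx
  rw [← Algebra.adjoin_eq_span_of_subset (R := K) hmonoid,
    (IntermediateField.adjoin_eq_top_iff_of_isAlgebraic
      fun x _ ↦ Algebra.IsAlgebraic.isAlgebraic x).mp hfield, Algebra.top_toSubmodule]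

theorem eq_zero_of_forall_apply_mul_algebraMap_eq_zero {S K L : Type*} [CommRing S] [Field K]
    [Field L] [Algebra S L] [IsFractionRing S L] [Algebra K L] [Algebra.IsAlgebraic K L]
    {Φ : L →ₗ[K] K} (hΦ : Φ ≠ 0) {y : L} (hy : ∀ a : S, Φ (y * algebraMap S L a) = 0) :
    y = 0 := by
  by_contra hy0
  have hcomp : Φ ∘ₗ LinearMap.mulLeft K y = 0 :=
    LinearMap.ext_on (span_range_algebraMap_eq_top S K L) (by rintro _ ⟨a, rfl⟩; exact hy a)
  refine hΦ (LinearMap.ext fun l ↦ ?_)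
  simpa [hy0] using LinearMap.congr_fun hcomp (y⁻¹ * l)

namespace LinearMap

variable {R K N : Type*} [CommRing R] [CommRing K] [Algebra R K] [AddCommGroup N] [Module R N]

theorem exists_lift_of_forall_mem_range (hinj : Function.Injective (algebraMap R K))
    (f : N →ₗ[R] K) (hf : ∀ n, f n ∈ (algebraMap R K).range) :
    ∃ ψ : N →ₗ[R] R, ∀ n, algebraMap R K (ψ n) = f n := by
  let e := LinearEquiv.ofInjective (Algebra.linearMap R K) hinj
  exact ⟨e.symm ∘ₗ f.codRestrict (range (Algebra.linearMap R K)) hf,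
    fun n ↦ congrArg Subtype.val (e.apply_symm_apply ⟨f n, hf n⟩)⟩

theorem exists_smul_eq_algebraMap_comp [IsFractionRing R K] [Module.Finite R N]
    (f : N →ₗ[R] K) :
    ∃ d ∈ nonZeroDivisors R, ∃ ψ : N →ₗ[R] R, ∀ n, algebraMap R K (ψ n) = d • f n := by
  obtain ⟨T, hT⟩ := Module.Finite.fg_top (R := R) (M := N)
  obtain ⟨d, hd⟩ := IsLocalization.exist_integer_multiples (nonZeroDivisors R) T f
  have hrange : ∀ n, (d • f) n ∈ (algebraMap R K).range := fun n ↦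
    span_le (p := (range (Algebra.linearMap R K)).comap (d • f)) |>.mpr hd (hT ▸ mem_top)
  exact ⟨d, d.2, exists_lift_of_forall_mem_range (IsFractionRing.injective R K) _ hrange⟩

theorem exists_ne_zero_of_ne_zero [IsDomain K] [IsFractionRing R K] [Module.Finite R N]
    {f : N →ₗ[R] K} (hf : f ≠ 0) : ∃ ψ : N →ₗ[R] R, ψ ≠ 0 := by
  obtain ⟨n, hn⟩ : ∃ n, f n ≠ 0 := not_forall.mp fun h ↦ hf (LinearMap.ext h)
  obtain ⟨d, hd, ψ, hψ⟩ := exists_smul_eq_algebraMap_comp f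
  refine ⟨ψ, fun hψ0 ↦ ?_⟩
  have : Nontrivial R := (IsFractionRing.nontrivial_iff_nontrivial R K).mpr inferInstance
  have hd' : algebraMap R K d ≠ 0 := IsFractionRing.to_map_ne_zero_of_mem_nonZeroDivisors hd
  simpa [hψ0, Algebra.smul_def, hd', hn] using hψ n

end LinearMap

theorem exists_linearMap_ne_zero (R S K L : Type*) [CommRing R] [CommRing S] [Field K] [Field L]
    [Algebra R S] [Module.Finite R S] [Algebra R K] [IsFractionRing R K] [Algebra S L]
    [Algebra K L] [Algebra R L] [IsScalarTower R K L] [IsScalarTower R S L] :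
    ∃ ψ : S →ₗ[R] R, ψ ≠ 0 := by
  obtain ⟨f, hf⟩ := Module.Projective.exists_dual_ne_zero K (one_ne_zero : (1 : L) ≠ 0)
  let g : S →ₗ[R] K := f.restrictScalars R ∘ₗ (IsScalarTower.toAlgHom R S L).toLinearMap
  exact LinearMap.exists_ne_zero_of_ne_zero (f := g) fun h ↦
    hf (by simpa [g] using LinearMap.congr_fun h 1)

theorem mem_of_generator_maps_into_general
    (R S K L : Type) [CommRing R] [CommRing S]
    [Field K] [Field L]
    [Algebra R S] [Module.Finite R S]
    [Algebra R K] [IsFractionRing R K] [Algebra S L] [IsFractionRing S L]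
    [Algebra K L] [Algebra R L] [IsScalarTower R K L] [IsScalarTower R S L]
    [FiniteDimensional K L]
    (Φ : L →ₗ[K] K)
    (hgen : ∀ ψ : S →ₗ[R] R, ∃ s : S, ∀ a : S,
      algebraMap R K (ψ a) = Φ (algebraMap S L (s * a)))
    (x : L) (hx : ∀ s : S, Φ (x * algebraMap S L s) ∈ (algebraMap R K).range) :
    x ∈ (algebraMap S L).range := by
  have hΦ : Φ ≠ 0 := by
    rintro rfl
    obtain ⟨ψ, hψ⟩ := exists_linearMap_ne_zero R S K L
    obtain ⟨s, hs⟩ := hgen ψ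
    exact hψ (LinearMap.ext fun a ↦ IsFractionRing.injective R K (by simpa using hs a))
  obtain ⟨ψ, hψ⟩ := LinearMap.exists_lift_of_forall_mem_range (IsFractionRing.injective R K)
    (Φ.restrictScalars R ∘ₗ (LinearMap.mulLeft K x).restrictScalars R ∘ₗ
      (IsScalarTower.toAlgHom R S L).toLinearMap) hx
  obtain ⟨s, hs⟩ := hgen ψ
  refine ⟨s, (sub_eq_zero.mp (eq_zero_of_forall_apply_mul_algebraMap_eq_zero (S := S) hΦ
    fun a ↦ ?_)).symm⟩
  rw [sub_mul, map_sub, ← map_mul, ← hs, hψ, sub_eq_zero]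
  rfl

/-- Let `R ⊆ S` be a module-finite inclusion of domains with fraction
fields `K ⊆ L`.  Suppose `Φ ∈ Hom_K(L, K)` satisfies `Φ(S) ⊆ R` and `Φ|_S` generates
`Hom_R(S, R)` as an `S`-module.  If `x ∈ L` satisfies `Φ(x·S) ⊆ R`, then `x ∈ S`. -/
theorem mem_of_generator_maps_into
    (R S K L : Type) [CommRing R] [CommRing S] [IsDomain R] [IsDomain S]
    [Field K] [Field L]
    [Algebra R S] (hRS : Function.Injective (algebraMap R S)) [Module.Finite R S]
    [Algebra R K] [IsFractionRing R K] [Algebra S L] [IsFractionRing S L]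
    [Algebra K L] [Algebra R L] [IsScalarTower R K L] [IsScalarTower R S L]
    [FiniteDimensional K L]
    (Φ : L →ₗ[K] K)
    (hΦS : ∀ s : S, Φ (algebraMap S L s) ∈ (algebraMap R K).range)
    (hgen : ∀ ψ : S →ₗ[R] R, ∃ s : S, ∀ a : S,
      algebraMap R K (ψ a) = Φ (algebraMap S L (s * a)))
    (x : L) (hx : ∀ s : S, Φ (x * algebraMap S L s) ∈ (algebraMap R K).range) :
    x ∈ (algebraMap S L).range :=
  mem_of_generator_maps_into_general R S K L Φ hgen x hx
end

section
/- Let K ⊆ L be a finite separable extension of F-finite fields of characteristic p > 0. Suppose φ : K^{1/p^e} → K is a non-zero K-linear map with L-linear extension φ̄ : L^{1/p^e} → L, and ψ : L → K is a K-linear map satisfying ψ ∘ φ̄ = φ ∘ ψ^{1/p^e}. Then there exists u ∈ F_{p^e} ∩ L (i.e., u satisfying u^{p^e} = u) such that ψ(−) = Tr_{L/K}(u · −). -/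
/-!
Write `q = p ^ e`. The Frobenius `x ↦ x ^ q` identifies `Kr ⊆ Lr` with `K ⊆ L`, so `Lr / Kr` is
separable and `Tr_{Lr/Kr}` is the `q`-th root of `Tr_{L/K}`. Since `L` spans `Lr` over `Kr`,
comparing both sides on products `c • l` gives `Tr_{L/K} ∘ φ̄ = φ ∘ Tr_{Lr/Kr}`. Writing
`ψ = Tr_{L/K}(u * -)` by nondegeneracy of the trace form and evaluating `ψ ∘ φ̄ = φ ∘ ψ^{1/q}` at
`y ^ (1/q)` yields `φ (Tr_{L/K}((u ^ q - u) * y) ^ (1/q)) = 0` for all `y`; the trace is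
surjective and `φ ≠ 0`, so `u ^ q = u`.
-/

open IsPurelyInseparable
open scoped Pointwise

theorem IsPurelyInseparable.exponent_le_of_forall_pow_mem {K L : Type*} [CommRing K] [Ring L]
    [Algebra K L] [HasExponent K L] (p : ℕ) [ExpChar K p] {e : ℕ}
    (h : ∀ x : L, x ^ p ^ e ∈ (algebraMap K L).range) : exponent K L ≤ e :=
  not_lt.1 fun he ↦ (exponent_min' p he).elim fun x hx ↦ hx (h x)

section FrobeniusEquiv

variable {p : ℕ} [Fact p.Prime] {e : ℕ} {K Kr : Type*} [Field K] [Field Kr] [Algebra K Kr]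
  [CharP K p] (hKr : ∀ x : Kr, x ^ p ^ e ∈ (algebraMap K Kr).range)
  (hKr' : ∀ a : K, ∃ x : Kr, x ^ p ^ e = algebraMap K Kr a)

noncomputable def frobeniusEquivOfRoots : Kr ≃+* K :=
  haveI : HasExponent K Kr := (hasExponent_iff' K Kr p).2 ⟨e, hKr⟩
  RingEquiv.ofBijective (iterateFrobenius K Kr p (exponent_le_of_forall_pow_mem p hKr))
    ⟨RingHom.injective _, fun a ↦ (hKr' a).imp fun x hx ↦ (algebraMap K Kr).injective <| by
      rw [algebraMap_iterateFrobenius, hx]⟩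

theorem algebraMap_frobeniusEquivOfRoots (x : Kr) :
    algebraMap K Kr (frobeniusEquivOfRoots hKr hKr' x) = x ^ p ^ e := by
  have : HasExponent K Kr := (hasExponent_iff' K Kr p).2 ⟨e, hKr⟩
  exact algebraMap_iterateFrobenius K p (exponent_le_of_forall_pow_mem p hKr) x

theorem frobeniusEquivOfRoots_algebraMap (a : K) :
    frobeniusEquivOfRoots hKr hKr' (algebraMap K Kr a) = a ^ p ^ e :=
  (algebraMap K Kr).injective <| by rw [algebraMap_frobeniusEquivOfRoots, map_pow]

end FrobeniusEquiv

theorem Algebra.trace_pow_char_pow {K L : Type*} [Field K] [Field L] [Algebra K L]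
    (p : ℕ) [Fact p.Prime] [CharP K p] (e : ℕ) [FiniteDimensional K L] [Algebra.IsSeparable K L]
    (x : L) : Algebra.trace K L (x ^ p ^ e) = Algebra.trace K L x ^ p ^ e := by
  have : CharP (AlgebraicClosure K) p :=
    charP_of_injective_algebraMap (algebraMap K (AlgebraicClosure K)).injective p
  apply (algebraMap K (AlgebraicClosure K)).injective
  simp only [map_pow, trace_eq_sum_embeddings (E := AlgebraicClosure K), sum_pow_char_pow]

theorem Algebra.exists_eq_trace_mul {K L : Type*} [Field K] [Field L] [Algebra K L]
    [FiniteDimensional K L] [Algebra.IsSeparable K L] (ψ : L →ₗ[K] K) :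
    ∃ u : L, ∀ x, ψ x = Algebra.trace K L (u * x) :=
  ⟨((traceForm K L).toDual (traceForm_nondegenerate K L)).symm ψ, fun x ↦ by
    rw [← traceForm_apply, ← LinearMap.BilinForm.toDual_def (traceForm_nondegenerate K L),
      LinearEquiv.apply_symm_apply]⟩

theorem Algebra.eq_zero_of_forall_trace_mul {K L M : Type*} [Field K] [Field L] [Algebra K L]
    [FiniteDimensional K L] [Algebra.IsSeparable K L] [Zero M] {g : K → M} (hg : ∃ a, g a ≠ 0)
    {w : L} (h : ∀ y, g (Algebra.trace K L (w * y)) = 0) : w = 0 := by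
  by_contra hw
  obtain ⟨a, ha⟩ := hg
  obtain ⟨t, rfl⟩ := Algebra.trace_surjective K L a
  exact ha (by simpa [mul_inv_cancel_left₀ hw] using h (w⁻¹ * t))

section RootFields

variable {p : ℕ} [Fact p.Prime] {e : ℕ} {K L Kr Lr : Type*} [Field K] [Field L] [Field Kr]
  [Field Lr] [Algebra K L] [Algebra K Kr] [Algebra L Lr] [Algebra Kr Lr] [CharP K p] [CharP L p]
  (hKr : ∀ x : Kr, x ^ p ^ e ∈ (algebraMap K Kr).range)
  (hKr' : ∀ a : K, ∃ x : Kr, x ^ p ^ e = algebraMap K Kr a)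
  (hLr : ∀ x : Lr, x ^ p ^ e ∈ (algebraMap L Lr).range)
  (hLr' : ∀ a : L, ∃ x : Lr, x ^ p ^ e = algebraMap L Lr a)

theorem eq_frobeniusEquivOfRoots_symm_of_pow_eq (ψ : L →ₗ[K] K) (ψroot : Lr →ₗ[Kr] Kr)
    (hψroot : ∀ (x : L) (X : Lr),
      X ^ p ^ e = algebraMap L Lr x → (ψroot X) ^ p ^ e = algebraMap K Kr (ψ x)) (X : Lr) :
    ψroot X = (frobeniusEquivOfRoots hKr hKr').symm (ψ (frobeniusEquivOfRoots hLr hLr' X)) := by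
  rw [RingEquiv.eq_symm_apply]
  apply (algebraMap K Kr).injective
  rw [algebraMap_frobeniusEquivOfRoots,
    hψroot _ X (algebraMap_frobeniusEquivOfRoots hLr hLr' X).symm]

variable [Algebra K Lr] [IsScalarTower K L Lr] [IsScalarTower K Kr Lr]

theorem algebraMap_comp_frobeniusEquivOfRoots :
    (algebraMap K L).comp (frobeniusEquivOfRoots hKr hKr' : Kr →+* K) =
      (frobeniusEquivOfRoots hLr hLr' : Lr →+* L).comp (algebraMap Kr Lr) := by
  ext c
  apply (algebraMap L Lr).injective
  simp only [RingHom.comp_apply, RingEquiv.coe_toRingHom, algebraMap_frobeniusEquivOfRoots,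
    ← IsScalarTower.algebraMap_apply, IsScalarTower.algebraMap_apply K Kr Lr, map_pow]

include hKr hKr' hLr hLr' in
theorem Algebra.IsSeparable.of_roots [Algebra.IsSeparable K L] : Algebra.IsSeparable Kr Lr :=
  (Algebra.IsSeparable.iff_of_equiv_equiv _ _
    (algebraMap_comp_frobeniusEquivOfRoots hKr hKr' hLr hLr')).2 ‹_›

theorem trace_eq_frobeniusEquivOfRoots_symm_trace (X : Lr) :
    Algebra.trace Kr Lr X =
      (frobeniusEquivOfRoots hKr hKr').symm
        (Algebra.trace K L (frobeniusEquivOfRoots hLr hLr' X)) :=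
  Algebra.trace_eq_of_equiv_equiv _ _ (algebraMap_comp_frobeniusEquivOfRoots hKr hKr' hLr hLr') X

include hKr hKr' hLr hLr' in
theorem trace_algebraMap_of_roots [FiniteDimensional K L] [Algebra.IsSeparable K L] (l : L) :
    Algebra.trace Kr Lr (algebraMap L Lr l) = algebraMap K Kr (Algebra.trace K L l) := by
  rw [trace_eq_frobeniusEquivOfRoots_symm_trace hKr hKr' hLr hLr', RingEquiv.symm_apply_eq,
    frobeniusEquivOfRoots_algebraMap, frobeniusEquivOfRoots_algebraMap,
    Algebra.trace_pow_char_pow p]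

include hKr hKr' hLr hLr' in
theorem span_range_algebraMap_of_roots [Algebra.IsSeparable K L] :
    Submodule.span Kr (Set.range (algebraMap L Lr)) = ⊤ := by
  have := Algebra.IsSeparable.of_roots hKr hKr' hLr hLr'
  have : CharP Kr p := charP_of_injective_algebraMap (algebraMap K Kr).injective p
  refine eq_top_iff.2 <| (Field.span_map_pow_expChar_pow_eq_top_of_isSeparable p e
    (v := (id : Lr → Lr)) (by rw [Set.range_id, Submodule.span_univ])).ge.trans ?_
  refine Submodule.span_mono ?_
  rintro _ ⟨X, rfl⟩
  exact ⟨_, algebraMap_frobeniusEquivOfRoots hLr hLr' X⟩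

include hKr hKr' hLr hLr' in
theorem trace_comp_eq_comp_trace [FiniteDimensional K L] [Algebra.IsSeparable K L]
    (φ : Kr →ₗ[K] K) (φbar : Lr →ₗ[L] L)
    (hext : ∀ x : Kr, φbar (algebraMap Kr Lr x) = algebraMap K L (φ x)) (X : Lr) :
    Algebra.trace K L (φbar X) = φ (Algebra.trace Kr Lr X) := by
  suffices Algebra.trace K L ∘ₗ φbar.restrictScalars K =
      φ ∘ₗ (Algebra.trace Kr Lr).restrictScalars K from LinearMap.congr_fun this X
  have hspan : Submodule.span K ((Set.univ : Set Kr) • Set.range (algebraMap L Lr)) = ⊤ := by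
    rw [Submodule.span_smul_of_span_eq_top Submodule.span_univ,
      span_range_algebraMap_of_roots hKr hKr' hLr hLr', Submodule.restrictScalars_top]
  refine LinearMap.ext_on hspan ?_
  rintro _ ⟨c, -, _, ⟨l, rfl⟩, rfl⟩
  have hc : c • algebraMap L Lr l = l • algebraMap Kr Lr c := by
    rw [Algebra.smul_def, Algebra.smul_def, mul_comm]
  simp only [LinearMap.coe_comp, Function.comp_apply, LinearMap.coe_restrictScalars]
  have lhs : Algebra.trace K L (φbar (c • algebraMap L Lr l)) = φ c * Algebra.trace K L l := by
    rw [hc, map_smul, hext, smul_eq_mul, ← Algebra.commutes, ← Algebra.smul_def, map_smul,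
      smul_eq_mul]
  have rhs : φ (Algebra.trace Kr Lr (c • algebraMap L Lr l)) = φ c * Algebra.trace K L l := by
    rw [map_smul, trace_algebraMap_of_roots hKr hKr' hLr hLr', smul_eq_mul, ← Algebra.commutes,
      ← Algebra.smul_def, map_smul, smul_eq_mul, mul_comm]
  exact lhs.trans rhs.symm

end RootFields

theorem trace_is_only_commuting_map_general
    (p : ℕ) [Fact p.Prime] (e : ℕ)
    (K L Kr Lr : Type) [Field K] [Field L] [Field Kr] [Field Lr]
    [Algebra K L] [Algebra K Kr] [Algebra L Lr] [Algebra Kr Lr] [Algebra K Lr]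
    [IsScalarTower K L Lr] [IsScalarTower K Kr Lr]
    [CharP K p]
    [FiniteDimensional K L] [Algebra.IsSeparable K L]
    (hKr : ∀ x : Kr, x ^ p ^ e ∈ (algebraMap K Kr).range)
    (hKr' : ∀ a : K, ∃ x : Kr, x ^ p ^ e = algebraMap K Kr a)
    (hLr : ∀ x : Lr, x ^ p ^ e ∈ (algebraMap L Lr).range)
    (hLr' : ∀ a : L, ∃ x : Lr, x ^ p ^ e = algebraMap L Lr a)
    (φ : Kr →ₗ[K] K) (hφ : φ ≠ 0)
    (φbar : Lr →ₗ[L] L)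
    (hext : ∀ x : Kr, φbar (algebraMap Kr Lr x) = algebraMap K L (φ x))
    (ψ : L →ₗ[K] K)
    (ψroot : Lr →ₗ[Kr] Kr)
    (hψroot : ∀ (x : L) (X : Lr),
      X ^ p ^ e = algebraMap L Lr x → (ψroot X) ^ p ^ e = algebraMap K Kr (ψ x))
    (hcomm : ∀ X : Lr, ψ (φbar X) = φ (ψroot X)) :
    ∃ u : L, u ^ p ^ e = u ∧ ∀ x : L, ψ x = Algebra.trace K L (u * x) := by
  have : CharP L p := charP_of_injective_algebraMap (algebraMap K L).injective p
  set σK := frobeniusEquivOfRoots hKr hKr'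
  set σL := frobeniusEquivOfRoots hLr hLr'
  obtain ⟨u, hu⟩ := Algebra.exists_eq_trace_mul ψ
  have key : ∀ y, φ (σK.symm (Algebra.trace K L (u ^ p ^ e * y))) =
      φ (σK.symm (Algebra.trace K L (u * y))) := fun y ↦ by
    have hσL : σL (u • σL.symm y) = u ^ p ^ e * y := by
      rw [Algebra.smul_def, map_mul, frobeniusEquivOfRoots_algebraMap, RingEquiv.apply_symm_apply]
    calc φ (σK.symm (Algebra.trace K L (u ^ p ^ e * y)))
        = φ (Algebra.trace Kr Lr (u • σL.symm y)) := by
          rw [trace_eq_frobeniusEquivOfRoots_symm_trace hKr hKr' hLr hLr', ← hσL]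
      _ = ψ (φbar (σL.symm y)) := by
          rw [← trace_comp_eq_comp_trace hKr hKr' hLr hLr' φ φbar hext, map_smul, hu, smul_eq_mul]
      _ = φ (σK.symm (Algebra.trace K L (u * y))) := by
          rw [hcomm, eq_frobeniusEquivOfRoots_symm_of_pow_eq hKr hKr' hLr hLr' ψ ψroot hψroot,
            RingEquiv.apply_symm_apply, hu]
  refine ⟨u, sub_eq_zero.1 <| Algebra.eq_zero_of_forall_trace_mul (g := φ ∘ σK.symm) ?_ ?_, hu⟩
  · obtain ⟨c, hc⟩ := DFunLike.ne_iff.1 hφ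
    exact ⟨σK c, by simpa using hc⟩
  · intro y
    simp only [Function.comp_apply, sub_mul, map_sub, key, sub_self]

/-- Let `K ⊆ L` be a finite separable extension of `F`-finite fields of
characteristic `p > 0`, with `Kr = K^{1/p^e} ⊆ Lr = L^{1/p^e}` the fields of `p^e`-th roots.
Suppose `φ : K^{1/p^e} → K` is a non-zero `K`-linear map with `L`-linear extension
`φ̄ : L^{1/p^e} → L`, and `ψ : L → K` is `K`-linear with `p^e`-th root
`ψroot : L^{1/p^e} → K^{1/p^e}` satisfying `ψ ∘ φ̄ = φ ∘ ψ^{1/p^e}`.  Then there is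
`u ∈ F_{p^e} ∩ L` (i.e. `u^{p^e} = u`) with `ψ(−) = Tr_{L/K}(u · −)`. -/
theorem trace_is_only_commuting_map
    (p : ℕ) [Fact p.Prime] (e : ℕ)
    (K L Kr Lr : Type) [Field K] [Field L] [Field Kr] [Field Lr]
    [Algebra K L] [Algebra K Kr] [Algebra L Lr] [Algebra Kr Lr] [Algebra K Lr]
    [IsScalarTower K L Lr] [IsScalarTower K Kr Lr]
    [CharP K p]
    [FiniteDimensional K L] [Algebra.IsSeparable K L]
    [FiniteDimensional K Kr] [FiniteDimensional L Lr]
    (hKr : ∀ x : Kr, x ^ p ^ e ∈ (algebraMap K Kr).range)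
    (hKr' : ∀ a : K, ∃ x : Kr, x ^ p ^ e = algebraMap K Kr a)
    (hLr : ∀ x : Lr, x ^ p ^ e ∈ (algebraMap L Lr).range)
    (hLr' : ∀ a : L, ∃ x : Lr, x ^ p ^ e = algebraMap L Lr a)
    (φ : Kr →ₗ[K] K) (hφ : φ ≠ 0)
    (φbar : Lr →ₗ[L] L)
    (hext : ∀ x : Kr, φbar (algebraMap Kr Lr x) = algebraMap K L (φ x))
    (ψ : L →ₗ[K] K)
    (ψroot : Lr →ₗ[Kr] Kr)
    (hψroot : ∀ (x : L) (X : Lr),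
      X ^ p ^ e = algebraMap L Lr x → (ψroot X) ^ p ^ e = algebraMap K Kr (ψ x))
    (hcomm : ∀ X : Lr, ψ (φbar X) = φ (ψroot X)) :
    ∃ u : L, u ^ p ^ e = u ∧ ∀ x : L, ψ x = Algebra.trace K L (u * x) :=
  trace_is_only_commuting_map_general p e K L Kr Lr hKr hKr' hLr hLr' φ hφ φbar hext ψ ψroot hψroot
    hcomm
end

section
/- Let R = F₂[[x²(1+x³)]] ⊆ S = F₂[[x]], and write t = x²(1+x³). Define the R-linear map φ : R^{1/2} → R on the basis {1, t^{1/2}} by φ(1) = 0 and φ(t^{1/2}) = t, and define the S-linear map φ̄ : S^{1/2} → S on the basis {1, x^{1/2}} by φ̄(1) = 0 and φ̄(x^{1/2}) = 1 + x³. Then φ̄ extends φ, i.e., φ̄ restricted to R^{1/2} equals φ. -/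
open PowerSeries

/-!
Both `f ∘ ρ` and `ρ ∘ g` are additive and satisfy `h (r ^ 2 * m) = ρ r * h m`. Over `𝔽₂` every
power series is `a ^ 2 + X * b ^ 2` (Frobenius is `expand 2`), so such a map is determined by its
values at `1` and `X`. Both vanish at `1`, and at `X` both give `ρ X`, because
`t = x ^ 2 * (1 + x ^ 3) = (x ^ 2) ^ 2 * x + x ^ 2 * 1`, so `φ̄ (t^{1/2}) = x ^ 2 * φ̄ (x^{1/2}) = t`.
-/

theorem PowerSeries.pow_char_eq_expand (p : ℕ) [Fact p.Prime] (f : PowerSeries (ZMod p)) :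
    f ^ p = expand p (NeZero.ne p) f := by
  rw [← MvPowerSeries.map_frobenius_expand p (NeZero.ne p), ZMod.frobenius_zmod,
    MvPowerSeries.map_id]
  rfl

theorem PowerSeries.exists_eq_expand_two_add_X_mul {R : Type*} [CommRing R]
    (r : PowerSeries R) :
    ∃ a b : PowerSeries R, r = expand 2 two_ne_zero a + X * expand 2 two_ne_zero b := by
  refine ⟨mk fun n => coeff (2 * n) r, mk fun n => coeff (2 * n + 1) r, ?_⟩
  ext n
  rcases Nat.even_or_odd' n with ⟨m, rfl | rfl⟩
  · rcases m with _ | m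
    · simp
    · rw [map_add, coeff_expand_mul, show 2 * (m + 1) = (2 * m + 1) + 1 by ring, coeff_succ_X_mul,
        coeff_expand_of_not_dvd _ _ _ (by omega)]
      simp [mul_add]
  · rw [map_add, coeff_succ_X_mul, coeff_expand_mul, coeff_expand_of_not_dvd _ _ _ (by omega)]
    simp

theorem PowerSeries.exists_eq_sq_add_X_mul_sq (r : PowerSeries (ZMod 2)) :
    ∃ a b : PowerSeries (ZMod 2), r = a ^ 2 + X * b ^ 2 := by
  simpa only [pow_char_eq_expand] using exists_eq_expand_two_add_X_mul r

theorem PowerSeries.funext_of_map_sq_mul {A : Type*} [Semiring A]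
    (σ : PowerSeries (ZMod 2) →+* A) {h₁ h₂ : PowerSeries (ZMod 2) → A}
    (add₁ : ∀ a b, h₁ (a + b) = h₁ a + h₁ b) (add₂ : ∀ a b, h₂ (a + b) = h₂ a + h₂ b)
    (sq_mul₁ : ∀ r m, h₁ (r ^ 2 * m) = σ r * h₁ m) (sq_mul₂ : ∀ r m, h₂ (r ^ 2 * m) = σ r * h₂ m)
    (one : h₁ 1 = h₂ 1) (hX : h₁ X = h₂ X) : h₁ = h₂ := by
  funext r
  obtain ⟨a, b, rfl⟩ := exists_eq_sq_add_X_mul_sq r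
  rw [← mul_one (a ^ 2), mul_comm X, add₁, add₂, sq_mul₁, sq_mul₁, sq_mul₂, sq_mul₂, one, hX]

/-- Let `R = F₂[[t]] ⊆ S = F₂[[x]]` via `t = x²(1+x³)`.
We encode `R^{1/2}` (resp. `S^{1/2}`) as `R` (resp. `S`) itself, an element `m` standing for
`m^{1/2}`; the module structure is twisted by Frobenius, so an additive map
`g : R → R` with `g(r² · m) = r · g(m)` is exactly an `R`-linear map `R^{1/2} → R`.
The map `φ` with `φ(1) = 0`, `φ(t^{1/2}) = t` corresponds to `g` with `g 1 = 0`, `g t = t`,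
and the map `φ̄` with `φ̄(1) = 0`, `φ̄(x^{1/2}) = 1 + x³` corresponds to `f` with `f 1 = 0`,
`f X = 1 + X³`.  Then `φ̄` extends `φ`: for every `r ∈ R`, `f(ρ(r)) = ρ(g(r))`, where
`ρ : R → S` is the inclusion sending `t` to `x²(1+x³)`. -/
theorem wild_ramification_extension_example
    (ρ : PowerSeries (ZMod 2) →+* PowerSeries (ZMod 2))
    (hρ : ρ (X : PowerSeries (ZMod 2)) = X ^ 2 * (1 + X ^ 3))
    (g : PowerSeries (ZMod 2) → PowerSeries (ZMod 2))
    (hg_add : ∀ a b, g (a + b) = g a + g b)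
    (hg_lin : ∀ r m, g (r ^ 2 * m) = r * g m)
    (hg1 : g 1 = 0) (hgt : g X = X)
    (f : PowerSeries (ZMod 2) → PowerSeries (ZMod 2))
    (hf_add : ∀ a b, f (a + b) = f a + f b)
    (hf_lin : ∀ s m, f (s ^ 2 * m) = s * f m)
    (hf1 : f 1 = 0) (hfx : f X = 1 + X ^ 3) :
    ∀ r : PowerSeries (ZMod 2), f (ρ r) = ρ (g r) := by
  have hρX : ρ X = X ^ 2 * 1 + (X ^ 2) ^ 2 * X := by rw [hρ]; ring
  refine congrFun (funext_of_map_sq_mul ρ (h₁ := f ∘ ρ) (h₂ := ρ ∘ g) ?_ ?_ ?_ ?_ ?_ ?_)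
  · intro a b; simp only [Function.comp, map_add, hf_add]
  · intro a b; simp only [Function.comp, hg_add, map_add]
  · intro r m; simp only [Function.comp, map_mul, map_pow, hf_lin]
  · intro r m; simp only [Function.comp, hg_lin, map_mul]
  · simp only [Function.comp, map_one, hf1, hg1, map_zero]
  · simp only [Function.comp, hgt, hρX, hf_add, hf_lin, hf1, hfx]
    ring
end

section
/- Let R ⊆ S be a module-finite, generically separable inclusion of F-finite normal domains of characteristic p > 0 with fraction fields K ⊆ L, and let φ : R^{1/p^e} → R be an R-linear map. Then φ extends to an S-linear map φ̄ : S^{1/p^e} → S if and only if for every height-one prime q of S lying over p in R, the localized map φ : (R_p)^{1/p^e} → R_p extends to an S_q-linear map (S_q)^{1/p^e} → S_q. -/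
/-!
Since `φbar` is `L`-linear, `φbar (t • x) = t • φbar x`, so `φbar` maps `S^{1/p^e}` into `S`
if and only if it maps `(S_q)^{1/p^e}` into `S_q` for every `q` in any family of primes with
`S = ⋂ S_q`. For a Noetherian normal domain the height-one primes form such a family: if
`y ∈ L \ S`, an associated prime `P = (S :_S z)` of the `S`-module `L / S` containing the
denominator ideal of `y` has height one, and `y ∉ S_P`.
-/

open IsLocalization Submodule

lemma Submodule.colon_bot_mkQ_singleton {R M : Type*} [CommRing R] [AddCommGroup M] [Module R M]
    (N : Submodule R M) (z : M) : (⊥ : Submodule R (M ⧸ N)).colon {N.mkQ z} = N.colon {z} := by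
  ext t
  rw [mem_colon_singleton, mem_colon_singleton, mem_bot, mkQ_apply, ← Quotient.mk_smul,
    Quotient.mk_eq_zero]

lemma mem_colon_one_singleton_of_mul_eq {S L : Type*} [CommSemiring S] [CommSemiring L]
    [Algebra S L] {y : L} {s t : S} (h : y * algebraMap S L t = algebraMap S L s) :
    t ∈ (1 : Submodule S L).colon {y} :=
  mem_colon_singleton.mpr (mem_one.mpr ⟨s, by rw [Algebra.smul_def, mul_comm, h]⟩)

section Hartogs

variable {S L : Type*} [CommRing S] [Field L] [Algebra S L] [IsFractionRing S L]
  [IsNoetherianRing S] [IsIntegrallyClosed S]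

lemma mem_one_of_forall_smul_mem_coeSubmodule {I : Ideal S} (hI : I ≠ ⊥) {z : L}
    (hz : ∀ u ∈ I, u • z ∈ coeSubmodule L I) : z ∈ (1 : Submodule S L) := by
  have hz_int : IsIntegral S z := by
    refine isIntegral_of_smul_mem_submodule (coeSubmodule L I) ?_
      ((IsNoetherian.noetherian I).map _) z ?_
    · rw [← coeSubmodule_bot L]
      exact fun h => hI (IsFractionRing.coeSubmodule_injective S L h)
    · intro n hn
      obtain ⟨u, hu, rfl⟩ := (mem_coeSubmodule L I).mp hn
      rw [smul_eq_mul, mul_comm, ← Algebra.smul_def]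
      exact hz u hu
  exact mem_one.mpr (IsIntegrallyClosed.isIntegral_iff.mp hz_int)

lemma eq_bot_of_lt_colon_one_singleton {z : L} (hz : z ∉ (1 : Submodule S L))
    {q : Ideal S} (hq : q.IsPrime) (hqP : q < (1 : Submodule S L).colon {z}) : q = ⊥ := by
  set P := (1 : Submodule S L).colon {z}
  by_contra hq0
  obtain ⟨w₀, hw₀P, hw₀⟩ : ∃ w₀ ∈ P, w₀ • z ∉ coeSubmodule L P := by
    by_contra! h
    exact hz (mem_one_of_forall_smul_mem_coeSubmodule (ne_bot_of_le_ne_bot hq0 hqP.le) h)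
  -- Neither `q` nor `(qL :_S z)` contains `P`, so neither does their union.
  obtain ⟨w, hwP, hwq, hwz⟩ : ∃ w ∈ P, w ∉ q ∧ w ∉ (coeSubmodule L q).colon {z} := by
    by_contra! h
    rcases Ideal.subset_union.mp fun w hw => or_iff_not_imp_left.mpr (h w hw) with hPq | hPq
    · exact hqP.not_ge hPq
    · exact hw₀ (coeSubmodule_mono L hqP.le (mem_colon_singleton.mp (hPq hw₀P)))
  obtain ⟨c, hc⟩ := mem_one.mp (mem_colon_singleton.mp hwP)
  have hcq : c ∉ q := fun hcq =>
    hwz (mem_colon_singleton.mpr (hc ▸ (mem_coeSubmodule L q).mpr ⟨c, hcq, rfl⟩))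
  -- `z` maps `q` into itself: for `u ∈ q`, `(u • z) * w = u * c ∈ q` and `w ∉ q`.
  refine hz (mem_one_of_forall_smul_mem_coeSubmodule hq0 fun u hu => ?_)
  obtain ⟨d, hd⟩ := mem_one.mp (mem_colon_singleton.mp (hqP.le hu))
  have hdw : d * w = u * c := IsFractionRing.injective S L <| by
    simp only [map_mul, hd, hc, Algebra.smul_def]
    ring
  have hdq : d ∈ q := (hq.mem_or_mem (hdw ▸ q.mul_mem_right c hu)).resolve_right hwq
  exact (mem_coeSubmodule L q).mpr ⟨d, hdq, hd⟩

theorem mem_range_algebraMap_of_forall_height_one (y : L)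
    (h : ∀ q : Ideal S, q.IsPrime → q ≠ ⊥ →
      (∀ q' : Ideal S, q'.IsPrime → q' < q → q' = ⊥) →
      ∃ s t : S, t ∉ q ∧ y * algebraMap S L t = algebraMap S L s) :
    y ∈ (algebraMap S L).range := by
  by_contra hy
  have hy0 : (1 : Submodule S L).mkQ y ≠ 0 := by simpa [mem_one] using hy
  obtain ⟨P, hP, hyP⟩ := exists_le_isAssociatedPrime_of_isNoetherianRing S _ hy0
  obtain ⟨hPprime, z, rfl⟩ := isAssociatedPrime_iff.mp hP
  obtain ⟨z, rfl⟩ := (1 : Submodule S L).mkQ_surjective z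
  simp only [colon_bot_mkQ_singleton] at hyP hPprime
  have hz : z ∉ (1 : Submodule S L) := fun hz =>
    hPprime.ne_top ((colon_eq_top_iff_subset _).mpr (by simpa using hz))
  have hP0 : (1 : Submodule S L).colon {z} ≠ ⊥ := by
    obtain ⟨⟨s, t⟩, hst⟩ := IsLocalization.surj (nonZeroDivisors S) y
    refine ne_bot_of_le_ne_bot ((Submodule.ne_bot_iff _).mpr ⟨t, ?_, ?_⟩) hyP
    · exact mem_colon_one_singleton_of_mul_eq hst
    · have : Nontrivial S := (algebraMap S L).domain_nontrivial
      exact nonZeroDivisors.ne_zero t.2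
  obtain ⟨s, t, ht, hyt⟩ :=
    h _ hPprime hP0 fun q hq hlt => eq_bot_of_lt_colon_one_singleton hz hq hlt
  exact ht (hyP (mem_colon_one_singleton_of_mul_eq hyt))

end Hartogs

lemma mul_pow_mem_range_of_pow_mul_eq {A B : Type*} [CommRing A] [CommRing B]
    (f : A →+* B) {x : B} {n : ℕ} {s t : A} (h : x ^ n * f t = f s) :
    (x * f t) ^ n ∈ f.range := by
  cases n with
  | zero => exact ⟨1, by simp⟩
  | succ k => exact ⟨s * t ^ k, by rw [map_mul, ← h, map_pow, mul_pow, pow_succ (f t)]; ring⟩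

theorem extension_iff_extension_in_codim_one_general
    (p : ℕ) (e : ℕ)
    (S L Lr : Type)
    [CommRing S]
    [IsNoetherianRing S]
    [IsIntegrallyClosed S]
    [Field L] [Field Lr]
    [Algebra S L] [IsFractionRing S L]
    [Algebra L Lr]
    [Algebra S Lr] [IsScalarTower S L Lr]
    -- its unique generic extension to `L^{1/p^e}`
    (φbar : Lr →ₗ[L] L) :
    (∀ x : Lr, x ^ p ^ e ∈ (algebraMap S Lr).range → φbar x ∈ (algebraMap S L).range) ↔
    (∀ q : Ideal S, q.IsPrime → q ≠ ⊥ →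
      (∀ q' : Ideal S, q'.IsPrime → q' < q → q' = ⊥) →
      ∀ x : Lr,
        (∃ s t : S, t ∉ q ∧ x ^ p ^ e * algebraMap S Lr t = algebraMap S Lr s) →
        ∃ s t : S, t ∉ q ∧ φbar x * algebraMap S L t = algebraMap S L s) := by
  constructor
  · rintro H q - - - x ⟨s, t, htq, hx⟩
    obtain ⟨s', hs'⟩ := H (x * algebraMap S Lr t) (mul_pow_mem_range_of_pow_mul_eq _ hx)
    refine ⟨s', t, htq, ?_⟩
    rw [hs', IsScalarTower.algebraMap_apply S L Lr, mul_comm x, ← Algebra.smul_def, map_smul,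
      smul_eq_mul, mul_comm]
  · rintro H x ⟨s, hs⟩
    refine mem_range_algebraMap_of_forall_height_one _ fun q hq hq0 hq1 => ?_
    exact H q hq hq0 hq1 x ⟨s, 1, hq.one_notMem, by rw [map_one, mul_one, hs]⟩

/-- Let `R ⊆ S` be a module-finite, generically separable inclusion of
`F`-finite normal (Noetherian, integrally closed) domains of characteristic `p > 0` with
fraction fields `K ⊆ L`, and let `Kr = K^{1/p^e} ⊆ Lr = L^{1/p^e}` be the fields of `p^e`-th
roots.  An `R`-linear map `φ : R^{1/p^e} → R` is encoded by its generic extension: a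
`K`-linear map `φ : Kr → K` carrying `R^{1/p^e} = {x : x^{p^e} ∈ R}` into `R`, together with
its unique generic `L`-linear extension `φbar : Lr → L`.  Then `φ` extends to an `S`-linear
map `S^{1/p^e} → S` (i.e. `φbar` carries `S^{1/p^e}` into `S`) if and only if for every
height-one prime `q` of `S`, the extension exists after localizing (i.e. `φbar` carries
`(S_q)^{1/p^e} = {x : x^{p^e} ∈ S_q}` into `S_q`). -/
theorem extension_iff_extension_in_codim_one
    (p : ℕ) [Fact p.Prime] (e : ℕ) (he : 1 ≤ e)
    (R S K L Kr Lr : Type)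
    [CommRing R] [CommRing S] [IsDomain R] [IsDomain S]
    [IsNoetherianRing R] [IsNoetherianRing S]
    [IsIntegrallyClosed R] [IsIntegrallyClosed S]
    [CharP R p]
    [Algebra R S] (hRS : Function.Injective (algebraMap R S)) [Module.Finite R S]
    [Field K] [Field L] [Field Kr] [Field Lr]
    [Algebra R K] [IsFractionRing R K] [Algebra S L] [IsFractionRing S L]
    [Algebra K L] [Algebra R L] [IsScalarTower R K L] [IsScalarTower R S L]
    [Algebra K Kr] [Algebra L Lr] [Algebra Kr Lr] [Algebra K Lr]
    [IsScalarTower K Kr Lr] [IsScalarTower K L Lr]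
    [Algebra R Kr] [IsScalarTower R K Kr]
    [Algebra S Lr] [IsScalarTower S L Lr]
    -- generic separability and `F`-finiteness
    [FiniteDimensional K L] [Algebra.IsSeparable K L]
    [FiniteDimensional K Kr] [FiniteDimensional L Lr]
    -- `Kr = K^{1/p^e}` and `Lr = L^{1/p^e}`
    (hKr : ∀ x : Kr, x ^ p ^ e ∈ (algebraMap K Kr).range)
    (hKr' : ∀ a : K, ∃ x : Kr, x ^ p ^ e = algebraMap K Kr a)
    (hLr : ∀ x : Lr, x ^ p ^ e ∈ (algebraMap L Lr).range)
    (hLr' : ∀ a : L, ∃ x : Lr, x ^ p ^ e = algebraMap L Lr a)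
    -- the map `φ : R^{1/p^e} → R`, given via its generic extension
    (φ : Kr →ₗ[K] K)
    (hφR : ∀ x : Kr, x ^ p ^ e ∈ (algebraMap R Kr).range → φ x ∈ (algebraMap R K).range)
    -- its unique generic extension to `L^{1/p^e}`
    (φbar : Lr →ₗ[L] L)
    (hext : ∀ x : Kr, φbar (algebraMap Kr Lr x) = algebraMap K L (φ x)) :
    (∀ x : Lr, x ^ p ^ e ∈ (algebraMap S Lr).range → φbar x ∈ (algebraMap S L).range) ↔
    (∀ q : Ideal S, q.IsPrime → q ≠ ⊥ →
      (∀ q' : Ideal S, q'.IsPrime → q' < q → q' = ⊥) →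
      ∀ x : Lr,
        (∃ s t : S, t ∉ q ∧ x ^ p ^ e * algebraMap S Lr t = algebraMap S Lr s) →
        ∃ s t : S, t ∉ q ∧ φbar x * algebraMap S L t = algebraMap S L s) :=
  extension_iff_extension_in_codim_one_general p e S L Lr φbar
end

section
/- Let R = F₃[y] ⊆ S = F₃[x] via y ↦ x². An R-linear map φ : R^{1/3} → R (determined on the free basis 1, y^{1/3}, y^{2/3} of R^{1/3} over R) extends to an S-linear map φ̄ : S^{1/3} → S if and only if y divides φ(y^{2/3}) in R. Moreover, when the extension exists it is given on the free basis 1, x^{1/3}, x^{2/3} of S^{1/3} over S by φ̄(1) = φ(1), φ̄(x^{1/3}) = φ(y^{2/3})/x, and φ̄(x^{2/3}) = φ(y^{1/3}). -/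
/-!
`F₃[X]` is free over its subring `expand 3 (F₃[X]) = {s ^ 3}` with basis `1, X, X²`; the
coordinate of `m` at `X ^ j` is `expandComponent j m`, built from the coefficients of `m` in
degrees `≡ j mod 3`. So a semilinear map is determined by its values on `1, X, X²`, and these can
be prescribed freely. If `f` extends `g` along `ρ = expand 2 : y ↦ x²`, then `f 1 = ρ (g 1)`,
`f x² = ρ (g y)` and, as `ρ y² = x⁴ = x³ · x`, `x · f x = ρ (g y²)`; such an `f x` exists iff
`x ∣ ρ (g y²)`, i.e. iff `y ∣ g y²`. Conversely, if `f` takes these values, `f ∘ ρ` and `ρ ∘ g`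
are semilinear maps agreeing on `1, y, y²`, hence equal.
-/

open Polynomial Finset

namespace Polynomial

section CommSemiring

variable {R : Type*} [CommSemiring R] {q : ℕ}

theorem coeff_divX_iterate (m : R[X]) (j n : ℕ) : (divX^[j] m).coeff n = m.coeff (n + j) := by
  induction j generalizing n with
  | zero => rfl
  | succ j ih => rw [Function.iterate_succ_apply', coeff_divX, ih, add_right_comm, add_assoc]

noncomputable def expandComponent (j : Fin q) (m : R[X]) : R[X] := contract q (divX^[j] m)

theorem coeff_expandComponent (j : Fin q) (m : R[X]) (i : ℕ) :
    (expandComponent j m).coeff i = m.coeff (i * q + j) := by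
  rw [expandComponent, coeff_contract j.pos.ne', coeff_divX_iterate]

theorem expandComponent_add (j : Fin q) (a b : R[X]) :
    expandComponent j (a + b) = expandComponent j a + expandComponent j b := by
  ext i
  simp only [coeff_add, coeff_expandComponent]

theorem contract_mul_X_pow_sub (j : Fin q) (m : R[X]) :
    contract q (m * X ^ (q - j)) = expandComponent j m * X := by
  ext i
  rw [coeff_contract j.pos.ne', coeff_mul_X_pow']
  rcases i with _ | i
  · simp only [zero_mul, coeff_mul_X_zero, ite_eq_right_iff]
    omega
  · have : q ≤ (i + 1) * q := Nat.le_mul_of_pos_left q i.succ_pos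
    rw [coeff_mul_X, coeff_expandComponent, if_pos (by omega)]
    congr 1
    rw [add_mul, one_mul] at *
    omega

theorem expandComponent_expand_mul (j : Fin q) (s m : R[X]) :
    expandComponent j (expand R q s * m) = s * expandComponent j m := by
  -- after multiplying by `X` both sides are contractions, so `contract_mul_expand` applies
  refine (isRegular_X (R := R)).right ?_
  dsimp only
  rw [← contract_mul_X_pow_sub, mul_comm (expand R q s), mul_right_comm,
    contract_mul_expand j.pos.ne', contract_mul_X_pow_sub]
  ring

theorem expandComponent_X_pow (j k : Fin q) :
    expandComponent j (X ^ (k : ℕ)) = if j = k then (1 : R[X]) else 0 := by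
  ext i
  rw [coeff_expandComponent, coeff_X_pow]
  rcases i with _ | i
  · simp [Fin.ext_iff, apply_ite (coeff · 0)]
  · have : q ≤ (i + 1) * q := Nat.le_mul_of_pos_left q i.succ_pos
    rw [if_neg (by omega), apply_ite (coeff · (i + 1))]
    simp [coeff_one]

theorem sum_expand_expandComponent_mul_X_pow (hq : 0 < q) (m : R[X]) :
    ∑ j : Fin q, expand R q (expandComponent j m) * X ^ (j : ℕ) = m := by
  ext n
  rw [finsetSum_coeff, Finset.sum_eq_single ⟨n % q, Nat.mod_lt _ hq⟩]
  · have hn : n - n % q = q * (n / q) := by have := Nat.div_add_mod n q; omega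
    rw [coeff_mul_X_pow', if_pos (Nat.mod_le n q), hn, coeff_expand_mul' hq, coeff_expandComponent,
      Nat.div_add_mod']
  · intro j _ hj
    rw [coeff_mul_X_pow', coeff_expand hq]
    split_ifs with hjn hdvd
    · have hmod := (Nat.modEq_iff_dvd' hjn).mpr hdvd
      rw [Nat.ModEq, Nat.mod_eq_of_lt j.isLt] at hmod
      exact absurd (Fin.ext hmod) hj
    · rfl
    · rfl
  · simp

theorem X_dvd_expand_iff {n : ℕ} (hn : 0 < n) {f : R[X]} : X ∣ expand R n f ↔ X ∣ f := by
  simp [X_dvd_iff, coeff_expand hn]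

noncomputable def expandComponentLift (c : Fin q → R[X]) (m : R[X]) : R[X] :=
  ∑ j, expandComponent j m * c j

theorem expandComponentLift_X_pow (c : Fin q → R[X]) (k : Fin q) :
    expandComponentLift c (X ^ (k : ℕ)) = c k := by
  simp [expandComponentLift, expandComponent_X_pow]

theorem values_of_extends_along_expand_two {f g : R[X] → R[X]}
    (hf : ∀ s m, f (expand R 3 s * m) = s * f m) (hfg : ∀ r, f (expand R 2 r) = expand R 2 (g r)) :
    f 1 = expand R 2 (g 1) ∧ X * f X = expand R 2 (g (X ^ 2)) ∧ f (X ^ 2) = expand R 2 (g X) := by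
  refine ⟨by simpa using hfg 1, ?_, by simpa using hfg X⟩
  rw [← hfg, map_pow, expand_X, ← pow_mul, show 2 * 2 = 3 + 1 from rfl, pow_succ,
    ← expand_X (R := R) 3, hf]

end CommSemiring

section CommRing

variable {R S T : Type*} [CommRing R] [CommRing S] [CommRing T] {q : ℕ}

/-- Since `expand K q s = s ^ q` over a field with `q` elements, this says that `h` is a
`σ`-semilinear map out of `K[X]^{1/q}`, with `m` standing for `m^{1/q}`. -/
structure IsExpandSemilinear (q : ℕ) (σ : R[X] →+* S) (h : R[X] → S) : Prop where
  map_add : ∀ a b, h (a + b) = h a + h b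
  map_expand_mul : ∀ s m, h (expand R q s * m) = σ s * h m

namespace IsExpandSemilinear

variable {σ : R[X] →+* S} {h : R[X] → S}

theorem eq_sum_expandComponent (hh : IsExpandSemilinear q σ h) (hq : 0 < q) (m : R[X]) :
    h m = ∑ j : Fin q, σ (expandComponent j m) * h (X ^ (j : ℕ)) := by
  conv_lhs => rw [← sum_expand_expandComponent_mul_X_pow hq m,
    ← AddMonoidHom.mk'_apply h hh.map_add, map_sum]
  simp only [AddMonoidHom.mk'_apply, hh.map_expand_mul]

theorem ext (hq : 0 < q) {h' : R[X] → S} (hh : IsExpandSemilinear q σ h)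
    (hh' : IsExpandSemilinear q σ h') (hX : ∀ j : Fin q, h (X ^ (j : ℕ)) = h' (X ^ (j : ℕ)))
    (m : R[X]) : h m = h' m := by
  rw [hh.eq_sum_expandComponent hq m, hh'.eq_sum_expandComponent hq m]
  simp only [hX]

theorem comp_expand (hh : IsExpandSemilinear q σ h) (n : ℕ) :
    IsExpandSemilinear q (σ.comp (expand R n)) (h ∘ expand R n) where
  map_add a b := by simp only [Function.comp_apply, _root_.map_add, hh.map_add]
  map_expand_mul s m := by
    show h (expand R n (expand R q s * m)) = σ (expand R n s) * h (expand R n m)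
    rw [map_mul, expand_expand, mul_comm n q, ← expand_expand, hh.map_expand_mul]

theorem ringHom_comp (hh : IsExpandSemilinear q σ h) (τ : S →+* T) :
    IsExpandSemilinear q (τ.comp σ) (τ ∘ h) where
  map_add a b := by simp only [Function.comp_apply, hh.map_add, _root_.map_add]
  map_expand_mul s m := by
    simp only [Function.comp_apply, hh.map_expand_mul, map_mul, RingHom.comp_apply]

end IsExpandSemilinear

theorem isExpandSemilinear_expandComponentLift (c : Fin q → R[X]) :
    IsExpandSemilinear q (RingHom.id R[X]) (expandComponentLift c) where
  map_add a b := by simp only [expandComponentLift, expandComponent_add, add_mul, sum_add_distrib]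
  map_expand_mul s m := by
    simp only [expandComponentLift, expandComponent_expand_mul, mul_sum, mul_assoc, RingHom.id_apply]

theorem exists_extension_along_expand_two_of_X_dvd {g : R[X] → R[X]}
    (hg : IsExpandSemilinear 3 (RingHom.id R[X]) g) (hdvd : X ∣ g (X ^ 2)) :
    ∃ f, IsExpandSemilinear 3 (RingHom.id R[X]) f ∧ ∀ r, f (expand R 2 r) = expand R 2 (g r) := by
  obtain ⟨Q, hQ⟩ := hdvd
  set ρ := expand R 2
  set c : Fin 3 → R[X] := ![ρ (g 1), X * ρ Q, ρ (g X)]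
  have hf := isExpandSemilinear_expandComponentLift c
  refine ⟨expandComponentLift c, hf,
    (hf.comp_expand 2).ext three_pos (hg.ringHom_comp (ρ : R[X] →+* R[X])) fun j => ?_⟩
  fin_cases j
  · simpa [c] using expandComponentLift_X_pow c 0
  · simpa [c] using expandComponentLift_X_pow c 2
  · calc expandComponentLift c (ρ (X ^ 2))
        = expandComponentLift c (expand R 3 X * X ^ ((1 : Fin 3) : ℕ)) := by
          congr 1; simp only [ρ, map_pow, expand_X, Fin.val_one]; ring
      _ = X * c 1 := by rw [hf.map_expand_mul, expandComponentLift_X_pow]; rfl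
      _ = ρ (g (X ^ 2)) := by simp [c, hQ, ρ]; ring

end CommRing

end Polynomial

/-- `R^{1/3}` is encoded as `R` itself, `m` standing for `m^{1/3}`: an `R`-linear
`φ : R^{1/3} → R` is an additive `g` with `g (r³ m) = r g m`, and `φ (y^{i/3}) = g (yⁱ)`; likewise
for `S`, and `R ⊆ S` is `aeval (X²)`. -/
theorem tame_extension_example
    (g : Polynomial (ZMod 3) → Polynomial (ZMod 3))
    (hg_add : ∀ a b, g (a + b) = g a + g b)
    (hg_lin : ∀ r m, g (r ^ 3 * m) = r * g m) :
    ((∃ f : Polynomial (ZMod 3) → Polynomial (ZMod 3),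
        (∀ a b, f (a + b) = f a + f b) ∧
        (∀ s m, f (s ^ 3 * m) = s * f m) ∧
        (∀ r : Polynomial (ZMod 3), f (aeval (X ^ 2 : Polynomial (ZMod 3)) r) =
          aeval (X ^ 2 : Polynomial (ZMod 3)) (g r))) ↔
      (X : Polynomial (ZMod 3)) ∣ g (X ^ 2)) ∧
    (∀ f : Polynomial (ZMod 3) → Polynomial (ZMod 3),
      (∀ a b, f (a + b) = f a + f b) →
      (∀ s m, f (s ^ 3 * m) = s * f m) →
      (∀ r : Polynomial (ZMod 3), f (aeval (X ^ 2 : Polynomial (ZMod 3)) r) =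
          aeval (X ^ 2 : Polynomial (ZMod 3)) (g r)) →
      f 1 = aeval (X ^ 2 : Polynomial (ZMod 3)) (g 1) ∧
      X * f X = aeval (X ^ 2 : Polynomial (ZMod 3)) (g (X ^ 2)) ∧
      f (X ^ 2) = aeval (X ^ 2 : Polynomial (ZMod 3)) (g X)) := by
  have hρ : ∀ r, aeval (X ^ 2 : (ZMod 3)[X]) r = expand (ZMod 3) 2 r := fun _ => rfl
  have hcube : ∀ s : (ZMod 3)[X], s ^ 3 = expand (ZMod 3) 3 s := fun s => (ZMod.expand_card s).symm
  simp only [hρ, hcube] at hg_lin ⊢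
  refine ⟨⟨fun ⟨f, _, hf, hfg⟩ => ?_, fun hdvd => ?_⟩,
    fun f _ hf hfg => values_of_extends_along_expand_two hf hfg⟩
  · rw [← X_dvd_expand_iff two_pos, ← (values_of_extends_along_expand_two hf hfg).2.1]
    exact dvd_mul_right X (f X)
  · obtain ⟨f, hf, hfg⟩ := exists_extension_along_expand_two_of_X_dvd ⟨hg_add, hg_lin⟩ hdvd
    exact ⟨f, hf.map_add, hf.map_expand_mul, hfg⟩
end

section
/- Let R = k[x²] ⊆ S = k[x] with char k = 3, and define τ ∈ Hom_R(S, R) by τ(1)=1, τ(x)=y² where y = x². Define φ : R^{1/3} → R by φ(1)=1, φ(y^{1/3})=1, φ(y^{2/3})=y, with S-linear extension φ̄ : S^{1/3} → S given by φ̄(1)=1, φ̄(x^{1/3})=x, φ̄(x^{2/3})=1. Then although τ splits the inclusion R ⊆ S, the commutativity φ ∘ τ^{1/3} = τ ∘ φ̄ fails: specifically φ(τ^{1/3}(x^{1/3})) = y while τ(φ̄(x^{1/3})) = y². -/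
/-!
The `1/3`-linear maps are encoded on `F₃[X]` itself: `g m = φ (m^{1/3})`, `f m = φ̄ (m^{1/3})`, and
`ρ = aeval (X²)` is the inclusion `y ↦ x²`, so `φ (τ^{1/3} (m^{1/3}))` becomes `g (τ m)`.

Over a perfect ring `K` of exponential characteristic `p`, every monomial is a `p`-th power times
one of `1, X, …, X^(p-1)`, so an additive map `h` on `K[X]` with `h (r ^ p * m) = σ r * h m` is
determined by its values on `1, X, …, X^(p-1)`. Both `f ∘ ρ` and `ρ ∘ g` are such maps with
`σ = ρ`, and they agree on `1, y, y²` because `ρ y = x²` and `ρ y² = x³ · x`; hence `φ̄` extends `φ`.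
The failure of commutativity is a direct computation: `g (τ x) = g (y²) = y`, whereas
`τ (f x) = τ x = y²`.
-/

open Polynomial

namespace Polynomial

variable {K S : Type*} [CommSemiring K] {p : ℕ} [ExpChar K p] [PerfectRing K p]

theorem C_mul_X_pow_eq_pow_mul_X_pow_mod (a : K) (n : ℕ) :
    C a * X ^ n = (C ((frobeniusEquiv K p).symm a) * X ^ (n / p)) ^ p * X ^ (n % p) := by
  rw [mul_pow, ← C_pow, frobeniusEquiv_symm_pow_p, ← pow_mul, mul_assoc, ← pow_add,
    Nat.div_add_mod']

variable [Semiring S]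

theorem funext_of_map_pow_mul {σ h₁ h₂ : K[X] → S}
    (h₁_add : ∀ a b, h₁ (a + b) = h₁ a + h₁ b) (h₂_add : ∀ a b, h₂ (a + b) = h₂ a + h₂ b)
    (h₁_pow_mul : ∀ r m, h₁ (r ^ p * m) = σ r * h₁ m)
    (h₂_pow_mul : ∀ r m, h₂ (r ^ p * m) = σ r * h₂ m)
    (h_X_pow : ∀ i < p, h₁ (X ^ i) = h₂ (X ^ i)) :
    h₁ = h₂ := by
  funext r
  induction r using Polynomial.induction_on' with
  | add a b ha hb => rw [h₁_add, h₂_add, ha, hb]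
  | monomial n a =>
    have hp : 0 < p := expChar_pos K p
    rw [← C_mul_X_pow_eq_monomial, C_mul_X_pow_eq_pow_mul_X_pow_mod (p := p), h₁_pow_mul,
      h₂_pow_mul, h_X_pow _ (Nat.mod_lt n hp)]

end Polynomial

theorem splitting_does_not_commute_example_general
    (τ : Polynomial (ZMod 3) → Polynomial (ZMod 3))
    (hτ_lin : ∀ (r s : Polynomial (ZMod 3)),
      τ (aeval (X ^ 2 : Polynomial (ZMod 3)) r * s) = r * τ s)
    (hτ1 : τ 1 = 1) (hτx : τ X = X ^ 2)
    (g : Polynomial (ZMod 3) → Polynomial (ZMod 3))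
    (hg_add : ∀ a b, g (a + b) = g a + g b)
    (hg_lin : ∀ r m, g (r ^ 3 * m) = r * g m)
    (hg1 : g 1 = 1) (hgy : g X = 1) (hgy2 : g (X ^ 2) = X)
    (f : Polynomial (ZMod 3) → Polynomial (ZMod 3))
    (hf_add : ∀ a b, f (a + b) = f a + f b)
    (hf_lin : ∀ s m, f (s ^ 3 * m) = s * f m)
    (hf1 : f 1 = 1) (hfx : f X = X) (hfx2 : f (X ^ 2) = 1) :
    (∀ r : Polynomial (ZMod 3), τ (aeval (X ^ 2 : Polynomial (ZMod 3)) r) = r) ∧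
    (∀ r : Polynomial (ZMod 3), f (aeval (X ^ 2 : Polynomial (ZMod 3)) r) =
        aeval (X ^ 2 : Polynomial (ZMod 3)) (g r)) ∧
    g (τ X) = X ∧ τ (f X) = X ^ 2 ∧ g (τ X) ≠ τ (f X) := by
  set ρ := aeval (R := ZMod 3) (X ^ 2 : Polynomial (ZMod 3))
  have h_extends : (fun r ↦ f (ρ r)) = fun r ↦ ρ (g r) := by
    refine funext_of_map_pow_mul (p := 3) (σ := ρ) ?_ ?_ ?_ ?_ ?_
    · intro a b; simp only [map_add, hf_add]
    · intro a b; simp only [hg_add, map_add]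
    · intro r m; simp only [map_mul, map_pow, hf_lin]
    · intro r m; simp only [hg_lin, map_mul]
    · intro i hi
      interval_cases i
      · simp [ρ, hf1, hg1]
      · simp [ρ, hfx2, hgy]
      · have hX4 : f (X ^ 4) = X ^ 2 := by
          rw [show (X ^ 4 : Polynomial (ZMod 3)) = X ^ 3 * X by ring, hf_lin, hfx, sq]
        simp [ρ, ← pow_mul, hX4, hgy2]
  refine ⟨fun r ↦ by simpa [hτ1] using hτ_lin r 1, congrFun h_extends, ?_, ?_, ?_⟩
  · rw [hτx, hgy2]
  · rw [hfx, hτx]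
  · rw [hτx, hfx, hgy2, hτx]
    exact fun h ↦ by simpa using congrArg natDegree h

/-- Let `R = F₃[y] ⊆ S = F₃[x]` via `y ↦ x²` (encoded by `ρ = aeval (X²)`,
with `y = X` in `R`).  We encode `p⁻ᵉ`-linear maps as in the `1/3`-root convention:
`g : R → R` (additive, `g(r³m) = r g(m)`) encodes `φ : R^{1/3} → R` with `φ(1)=1`,
`φ(y^{1/3})=1`, `φ(y^{2/3})=y`; `f : S → S` encodes its extension `φ̄` with `φ̄(1)=1`,
`φ̄(x^{1/3})=x`, `φ̄(x^{2/3})=1`; and `τ : S → R` (additive, `R`-linear) has `τ(1)=1`,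
`τ(x)=y²`.  Then `τ` splits the inclusion `R ⊆ S` and `φ̄` extends `φ`, yet the
commutativity `φ ∘ τ^{1/3} = τ ∘ φ̄` fails: `φ(τ^{1/3}(x^{1/3})) = y` while
`τ(φ̄(x^{1/3})) = y²`.  (Note `τ^{1/3}(m^{1/3}) = (τ m)^{1/3}`, so `φ(τ^{1/3}(m^{1/3}))`
is encoded by `g (τ m)`.) -/
theorem splitting_does_not_commute_example
    (τ : Polynomial (ZMod 3) → Polynomial (ZMod 3))
    (hτ_add : ∀ a b, τ (a + b) = τ a + τ b)
    (hτ_lin : ∀ (r s : Polynomial (ZMod 3)),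
      τ (aeval (X ^ 2 : Polynomial (ZMod 3)) r * s) = r * τ s)
    (hτ1 : τ 1 = 1) (hτx : τ X = X ^ 2)
    (g : Polynomial (ZMod 3) → Polynomial (ZMod 3))
    (hg_add : ∀ a b, g (a + b) = g a + g b)
    (hg_lin : ∀ r m, g (r ^ 3 * m) = r * g m)
    (hg1 : g 1 = 1) (hgy : g X = 1) (hgy2 : g (X ^ 2) = X)
    (f : Polynomial (ZMod 3) → Polynomial (ZMod 3))
    (hf_add : ∀ a b, f (a + b) = f a + f b)
    (hf_lin : ∀ s m, f (s ^ 3 * m) = s * f m)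
    (hf1 : f 1 = 1) (hfx : f X = X) (hfx2 : f (X ^ 2) = 1) :
    (∀ r : Polynomial (ZMod 3), τ (aeval (X ^ 2 : Polynomial (ZMod 3)) r) = r) ∧
    (∀ r : Polynomial (ZMod 3), f (aeval (X ^ 2 : Polynomial (ZMod 3)) r) =
        aeval (X ^ 2 : Polynomial (ZMod 3)) (g r)) ∧
    g (τ X) = X ∧ τ (f X) = X ^ 2 ∧ g (τ X) ≠ τ (f X) :=
  splitting_does_not_commute_example_general τ hτ_lin hτ1 hτx g hg_add hg_lin hg1 hgy hgy2 f hf_add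
    hf_lin hf1 hfx hfx2
end

section
/- Let R ⊆ S be a module-finite extension of Noetherian normal domains with R a DVR and S a semi-local Dedekind domain of characteristic p > 0, both F-finite. Let Ψ generate Hom_R(S, R) as an S-module, Φ_S generate Hom_S(S^{1/p^e}, S) as an S^{1/p^e}-module, and Φ_R generate Hom_R(R^{1/p^e}, R) as an R^{1/p^e}-module. Then Ψ ∘ Φ_S and Φ_R ∘ Ψ^{1/p^e} both generate Hom_R(S^{1/p^e}, R) as an S^{1/p^e}-module; in particular there is a unit u ∈ S with Ψ ∘ Φ_S (−) = Φ_R ∘ Ψ^{1/p^e}(u^{1/p^e} · −). -/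
/-!
Both composites are instances of one principle: if `Ψ : S → R` generates `Hom_R(S, R)` and
`Φ : T → S` generates `Hom_S(T, S)`, then `Ψ ∘ Φ` generates `Hom_R(T, R)`, provided the dual of
`S` separates points (here `S` is finite and torsion-free over the PID `R`, hence free). For
`Ψ ∘ Φ_S` this is the tower `R → S → S^{1/p^e}`; for `Φ_R ∘ Ψ^{1/p^e}` it is the tower
`R → R^{1/p^e} → S^{1/p^e}`, where `Ψ^{1/p^e}` generates because it is the transport of `Ψ` along
the Frobenius isomorphisms `R^{1/p^e} ≅ R`, `S^{1/p^e} ≅ S`. Two generators of the same rank-one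
dual differ by a unit, and a unit of `S^{1/p^e}` is the root of a unit of `S`.
-/

def IsDualGenerator (R : Type*) {A : Type*} [CommRing R] [CommRing A] [Algebra R A]
    (φ : A →ₗ[R] R) : Prop :=
  ∀ θ : A →ₗ[R] R, ∃ a : A, ∀ b : A, θ b = φ (a * b)

namespace IsDualGenerator

variable {R A : Type*} [CommRing R] [CommRing A] [Algebra R A] {φ : A →ₗ[R] R}

theorem eq_of_forall_mul [Module.Projective R A] (hφ : IsDualGenerator R φ) {c c' : A}
    (h : ∀ b, φ (c * b) = φ (c' * b)) : c = c' := by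
  rw [← sub_eq_zero, ← Module.forall_dual_apply_eq_zero_iff R]
  intro θ
  obtain ⟨a, ha⟩ := hφ θ
  rw [ha, mul_comm, sub_mul, map_sub, h, sub_self]

theorem exists_isUnit_eq [Module.Projective R A] {φ' : A →ₗ[R] R} (hφ : IsDualGenerator R φ)
    (hφ' : IsDualGenerator R φ') : ∃ v : A, IsUnit v ∧ ∀ b, φ b = φ' (v * b) := by
  obtain ⟨v, hv⟩ := hφ' φ
  obtain ⟨w, hw⟩ := hφ φ'
  have hwv : w * v = 1 := hφ.eq_of_forall_mul fun b => by rw [mul_assoc, ← hw, ← hv, one_mul]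
  exact ⟨v, .of_mul_eq_one_right w hwv, hv⟩

theorem comp {T : Type*} [CommRing T] [Algebra A T] [Algebra R T] [IsScalarTower R A T]
    [Module.Projective R A] {Φ : T →ₗ[A] A} (hφ : IsDualGenerator R φ)
    (hΦ : IsDualGenerator A Φ) : IsDualGenerator R (φ ∘ₗ Φ.restrictScalars R) := by
  intro θ
  choose σ hσ using fun b : T => hφ (θ ∘ₗ (LinearMap.toSpanSingleton A T b).restrictScalars R)
  simp only [LinearMap.coe_comp, LinearMap.coe_restrictScalars, Function.comp_apply,
    LinearMap.toSpanSingleton_apply] at hσ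
  let σₗ : T →ₗ[A] A :=
    { toFun := σ
      map_add' := fun b b' => hφ.eq_of_forall_mul fun s => by
        rw [← hσ, smul_add, map_add, hσ, hσ, add_mul, map_add]
      map_smul' := fun t b => hφ.eq_of_forall_mul fun s => by
        rw [← hσ, smul_smul, hσ, smul_eq_mul, RingHom.id_apply]
        ring_nf }
  obtain ⟨a, ha⟩ := hΦ σₗ
  refine ⟨a, fun b => ?_⟩
  calc θ b = φ (σ b) := by simpa using hσ b 1
    _ = φ (Φ (a * b)) := congrArg φ (ha b)

end IsDualGenerator

section RingEquiv

variable {R S R' S' : Type*} [CommRing R] [CommRing S] [CommRing R'] [CommRing S']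
  [Algebra R S] [Algebra R' S'] (eR : R' ≃+* R) (eS : S' ≃+* S)

def LinearMap.conjRingEquiv (h : ∀ y, eS (algebraMap R' S' y) = algebraMap R S (eR y))
    (φ : S →ₗ[R] R) : S' →ₗ[R'] R' where
  toFun x := eR.symm (φ (eS x))
  map_add' x y := by simp only [map_add]
  map_smul' y x := by
    rw [Algebra.smul_def, map_mul, h, ← Algebra.smul_def, map_smul, smul_eq_mul, map_mul,
      RingEquiv.symm_apply_apply, RingHom.id_apply, smul_eq_mul]

@[simp]
theorem LinearMap.conjRingEquiv_apply (h : ∀ y, eS (algebraMap R' S' y) = algebraMap R S (eR y))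
    (φ : S →ₗ[R] R) (x : S') : φ.conjRingEquiv eR eS h x = eR.symm (φ (eS x)) :=
  rfl

theorem IsDualGenerator.conjRingEquiv (h : ∀ y, eS (algebraMap R' S' y) = algebraMap R S (eR y))
    {φ : S →ₗ[R] R} (hφ : IsDualGenerator R φ) :
    IsDualGenerator R' (φ.conjRingEquiv eR eS h) := by
  intro θ
  have h' : ∀ r, eS.symm (algebraMap R S r) = algebraMap R' S' (eR.symm r) := fun r =>
    eS.injective (by rw [h, RingEquiv.apply_symm_apply, RingEquiv.apply_symm_apply])
  obtain ⟨a, ha⟩ := hφ (θ.conjRingEquiv eR.symm eS.symm h')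
  refine ⟨eS.symm a, fun b => ?_⟩
  have := ha (eS b)
  simp only [LinearMap.conjRingEquiv_apply, RingEquiv.symm_symm, RingEquiv.symm_apply_apply] at this
  simp only [LinearMap.conjRingEquiv_apply, map_mul, RingEquiv.apply_symm_apply, ← this,
    RingEquiv.symm_apply_apply]

end RingEquiv

section Frobenius

variable {A B : Type*} [CommRing A] [CommRing B] [Algebra A B] (p e : ℕ) [ExpChar B p]
  (hinj : Function.Injective (algebraMap A B))
  (hpow : ∀ x : B, x ^ p ^ e ∈ (algebraMap A B).range)

noncomputable def frobeniusDescent : B →+* A where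
  toFun x := (hpow x).choose
  map_one' := hinj (by rw [(hpow 1).choose_spec, one_pow, map_one])
  map_mul' x y := hinj (by rw [map_mul, (hpow _).choose_spec, (hpow _).choose_spec,
    (hpow _).choose_spec, mul_pow])
  map_zero' := hinj (by rw [(hpow 0).choose_spec, zero_pow (expChar_pow_pos B p e).ne', map_zero])
  map_add' x y := hinj (by rw [map_add, (hpow _).choose_spec, (hpow _).choose_spec,
    (hpow _).choose_spec, add_pow_expChar_pow])

theorem algebraMap_frobeniusDescent (x : B) :
    algebraMap A B (frobeniusDescent p e hinj hpow x) = x ^ p ^ e :=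
  (hpow x).choose_spec

theorem frobeniusDescent_bijective [IsReduced B]
    (hroot : ∀ a : A, ∃ x : B, x ^ p ^ e = algebraMap A B a) :
    Function.Bijective (frobeniusDescent p e hinj hpow) := by
  refine ⟨fun x y hxy => iterateFrobenius_inj B p e ?_, fun a => ?_⟩
  · simpa only [iterateFrobenius_def, algebraMap_frobeniusDescent] using
      congrArg (algebraMap A B) hxy
  · obtain ⟨x, hx⟩ := hroot a
    exact ⟨x, hinj (by rw [algebraMap_frobeniusDescent, hx])⟩

theorem frobeniusDescent_algebraMap {R S R' S' : Type*} [CommRing R] [CommRing S] [CommRing R']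
    [CommRing S'] [Algebra R S] [Algebra R R'] [Algebra S S'] [Algebra R' S'] [Algebra R S']
    [IsScalarTower R R' S'] [IsScalarTower R S S'] (p e : ℕ) [ExpChar R' p] [ExpChar S' p]
    (hR : Function.Injective (algebraMap R R'))
    (hpowR : ∀ x : R', x ^ p ^ e ∈ (algebraMap R R').range)
    (hS : Function.Injective (algebraMap S S'))
    (hpowS : ∀ x : S', x ^ p ^ e ∈ (algebraMap S S').range)
    (y : R') :
    frobeniusDescent p e hS hpowS (algebraMap R' S' y) =
      algebraMap R S (frobeniusDescent p e hR hpowR y) :=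
  hS (by rw [algebraMap_frobeniusDescent, ← IsScalarTower.algebraMap_apply R S S',
    IsScalarTower.algebraMap_apply R R' S', algebraMap_frobeniusDescent, map_pow])

end Frobenius

theorem compositions_generate_dual_general
    (p : ℕ) [Fact p.Prime] (e : ℕ)
    (R S Rr Sr : Type)
    [CommRing R] [CommRing S] [CommRing Rr] [CommRing Sr]
    [IsDomain R] [IsDomain S] [IsDomain Rr] [IsDomain Sr]
    [IsDiscreteValuationRing R]
    [CharP R p]
    [Algebra R S] (hRS : Function.Injective (algebraMap R S)) [Module.Finite R S]
    [Algebra R Rr] [Algebra S Sr] [Algebra Rr Sr] [Algebra R Sr]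
    [IsScalarTower R Rr Sr] [IsScalarTower R S Sr]
    (hRRr : Function.Injective (algebraMap R Rr))
    (hSSr : Function.Injective (algebraMap S Sr))
    (hRrSr : Function.Injective (algebraMap Rr Sr))
    -- `F`-finiteness
    [Module.Finite R Rr] [Module.Finite S Sr]
    -- `Rr = R^{1/p^e}` and `Sr = S^{1/p^e}`
    (hRr : ∀ x : Rr, x ^ p ^ e ∈ (algebraMap R Rr).range)
    (hRr' : ∀ a : R, ∃ x : Rr, x ^ p ^ e = algebraMap R Rr a)
    (hSr : ∀ x : Sr, x ^ p ^ e ∈ (algebraMap S Sr).range)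
    (hSr' : ∀ a : S, ∃ x : Sr, x ^ p ^ e = algebraMap S Sr a)
    -- the generators
    (Ψ : S →ₗ[R] R)
    (hΨ : ∀ θ : S →ₗ[R] R, ∃ a : S, ∀ b : S, θ b = Ψ (a * b))
    (ΦS : Sr →ₗ[S] S)
    (hΦS : ∀ θ : Sr →ₗ[S] S, ∃ a : Sr, ∀ b : Sr, θ b = ΦS (a * b))
    (ΦR : Rr →ₗ[R] R)
    (hΦR : ∀ θ : Rr →ₗ[R] R, ∃ a : Rr, ∀ b : Rr, θ b = ΦR (a * b))
    -- the `p^e`-th root of `Ψ`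
    (Ψroot : Sr → Rr)
    (hΨroot : ∀ (x : S) (X : Sr),
      X ^ p ^ e = algebraMap S Sr x → (Ψroot X) ^ p ^ e = algebraMap R Rr (Ψ x)) :
    (∀ θ : Sr →ₗ[R] R, ∃ a : Sr, ∀ b : Sr, θ b = Ψ (ΦS (a * b))) ∧
    (∀ θ : Sr →ₗ[R] R, ∃ a : Sr, ∀ b : Sr, θ b = ΦR (Ψroot (a * b))) ∧
    (∃ (u : S) (v : Sr), IsUnit u ∧ v ^ p ^ e = algebraMap S Sr u ∧
      ∀ b : Sr, Ψ (ΦS b) = ΦR (Ψroot (v * b))) := by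
  replace hΨ : IsDualGenerator R Ψ := hΨ
  replace hΦS : IsDualGenerator S ΦS := hΦS
  replace hΦR : IsDualGenerator R ΦR := hΦR
  have : CharP Rr p := charP_of_injective_algebraMap hRRr p
  have : CharP Sr p := charP_of_injective_algebraMap hRrSr p
  have : Module.IsTorsionFree R S := Module.isTorsionFree_iff_algebraMap_injective.mpr hRS
  have : Module.IsTorsionFree R Rr := Module.isTorsionFree_iff_algebraMap_injective.mpr hRRr
  have : Module.IsTorsionFree R Sr := Module.isTorsionFree_iff_algebraMap_injective.mpr
    (by rw [IsScalarTower.algebraMap_eq R Rr Sr]; exact hRrSr.comp hRRr)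
  have : Module.Finite R Sr := Module.Finite.trans S Sr
  let eR := RingEquiv.ofBijective _ (frobeniusDescent_bijective p e hRRr hRr hRr')
  let eS := RingEquiv.ofBijective _ (frobeniusDescent_bijective p e hSSr hSr hSr')
  have heR : ∀ y, algebraMap R Rr (eR y) = y ^ p ^ e := algebraMap_frobeniusDescent p e hRRr hRr
  have heS : ∀ x, algebraMap S Sr (eS x) = x ^ p ^ e := algebraMap_frobeniusDescent p e hSSr hSr
  have hcompat : ∀ y, eS (algebraMap Rr Sr y) = algebraMap R S (eR y) :=
    frobeniusDescent_algebraMap p e hRRr hRr hSSr hSr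
  have hΨroot' : ∀ X, Ψ.conjRingEquiv eR eS hcompat X = Ψroot X := fun X =>
    eR.symm_apply_eq.mpr <| hRRr <| by rw [heR, hΨroot _ _ (heS X).symm]
  have h1 := hΨ.comp hΦS
  have h2 := hΦR.comp (hΨ.conjRingEquiv eR eS hcompat)
  obtain ⟨v, hv, hvb⟩ := h1.exists_isUnit_eq h2
  refine ⟨h1, fun θ => ?_, eS v, v, hv.map eS, (heS v).symm, ?_⟩
  · simpa only [LinearMap.comp_apply, LinearMap.restrictScalars_apply, hΨroot'] using h2 θ
  · simpa only [LinearMap.comp_apply, LinearMap.restrictScalars_apply, hΨroot'] using hvb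

/-- Let `R ⊆ S` be a module-finite extension with `R` a DVR and `S` a
semi-local Dedekind domain, of characteristic `p > 0`, both `F`-finite, with rings of
`p^e`-th roots `Rr = R^{1/p^e}` and `Sr = S^{1/p^e}`.  Let `Ψ` generate `Hom_R(S, R)` as an
`S`-module, `Φ_S` generate `Hom_S(S^{1/p^e}, S)` as an `S^{1/p^e}`-module, and `Φ_R`
generate `Hom_R(R^{1/p^e}, R)` as an `R^{1/p^e}`-module; let `Ψroot : Sr → Rr` be the
`p^e`-th root of `Ψ`.  Then `Ψ ∘ Φ_S` and `Φ_R ∘ Ψ^{1/p^e}` both generate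
`Hom_R(S^{1/p^e}, R)` as an `S^{1/p^e}`-module; in particular there is a unit `u ∈ S`
(with `p^e`-th root `v ∈ S^{1/p^e}`) such that `Ψ ∘ Φ_S(−) = Φ_R ∘ Ψ^{1/p^e}(u^{1/p^e}·−)`. -/
theorem compositions_generate_dual
    (p : ℕ) [Fact p.Prime] (e : ℕ)
    (R S Rr Sr : Type)
    [CommRing R] [CommRing S] [CommRing Rr] [CommRing Sr]
    [IsDomain R] [IsDomain S] [IsDomain Rr] [IsDomain Sr]
    [IsDiscreteValuationRing R] [IsDedekindDomain S]
    (hsemilocal : {I : Ideal S | I.IsMaximal}.Finite)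
    [CharP R p]
    [Algebra R S] (hRS : Function.Injective (algebraMap R S)) [Module.Finite R S]
    [Algebra R Rr] [Algebra S Sr] [Algebra Rr Sr] [Algebra R Sr]
    [IsScalarTower R Rr Sr] [IsScalarTower R S Sr]
    (hRRr : Function.Injective (algebraMap R Rr))
    (hSSr : Function.Injective (algebraMap S Sr))
    (hRrSr : Function.Injective (algebraMap Rr Sr))
    -- `F`-finiteness
    [Module.Finite R Rr] [Module.Finite S Sr]
    -- `Rr = R^{1/p^e}` and `Sr = S^{1/p^e}`
    (hRr : ∀ x : Rr, x ^ p ^ e ∈ (algebraMap R Rr).range)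
    (hRr' : ∀ a : R, ∃ x : Rr, x ^ p ^ e = algebraMap R Rr a)
    (hSr : ∀ x : Sr, x ^ p ^ e ∈ (algebraMap S Sr).range)
    (hSr' : ∀ a : S, ∃ x : Sr, x ^ p ^ e = algebraMap S Sr a)
    -- the generators
    (Ψ : S →ₗ[R] R)
    (hΨ : ∀ θ : S →ₗ[R] R, ∃ a : S, ∀ b : S, θ b = Ψ (a * b))
    (ΦS : Sr →ₗ[S] S)
    (hΦS : ∀ θ : Sr →ₗ[S] S, ∃ a : Sr, ∀ b : Sr, θ b = ΦS (a * b))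
    (ΦR : Rr →ₗ[R] R)
    (hΦR : ∀ θ : Rr →ₗ[R] R, ∃ a : Rr, ∀ b : Rr, θ b = ΦR (a * b))
    -- the `p^e`-th root of `Ψ`
    (Ψroot : Sr → Rr)
    (hΨroot : ∀ (x : S) (X : Sr),
      X ^ p ^ e = algebraMap S Sr x → (Ψroot X) ^ p ^ e = algebraMap R Rr (Ψ x)) :
    (∀ θ : Sr →ₗ[R] R, ∃ a : Sr, ∀ b : Sr, θ b = Ψ (ΦS (a * b))) ∧
    (∀ θ : Sr →ₗ[R] R, ∃ a : Sr, ∀ b : Sr, θ b = ΦR (Ψroot (a * b))) ∧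
    (∃ (u : S) (v : Sr), IsUnit u ∧ v ^ p ^ e = algebraMap S Sr u ∧
      ∀ b : Sr, Ψ (ΦS b) = ΦR (Ψroot (v * b))) :=
  compositions_generate_dual_general p e R S Rr Sr hRS hRRr hSSr hRrSr hRr hRr' hSr hSr' Ψ hΨ ΦS hΦS
    ΦR hΦR Ψroot hΨroot
end

section
/- Let R = F₂[[x,y,z]]/⟨z² + xyz + xy² + x²y⟩ and let S = R[u,v]/⟨u² + xu + x, v² + yv + y, z + xv + yu⟩ ≅ F₂[[u,v]], where the inclusion R ⊆ S = F₂[[u,v]] is determined by x = u + ū, y = v + v̄, z = uv̄ + ūv with ū = u + u²/(1+u), v̄ = v + v²/(1+v). Then the trace map Tr : S → R of the degree-two extension Frac(R) ⊆ Frac(S) satisfies Tr(u) = x, Tr(v) = y, Tr(uv) = xy + z, and its image is the maximal ideal ⟨x, y, z⟩ ⊊ R; in particular Tr is not surjective. -/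
/-!
From `σ(u)(1 + u) = u` one gets `u² = x·u + x` with `x = u + σ(u)` invariant, and likewise
`v² = y·v + y`. Hence `uⁿvᵐ = α + βu + γv + δuv` with invariant coefficients of order at least
`(n - 1)/2 + (m - 1)/2`, and summing the monomial expansion of any `s` (the fixed locus of the
continuous map `σ` is closed) gives `S = R + Ru + Rv + Ruv`. The trace is `R`-linear and kills
`R` (characteristic 2), so its image is `Rx + Ry + R(xy + z) = Rx + Ry + Rz`, which misses `1`
because `x`, `y`, `z` have no constant term.
-/

open MvPowerSeries

/-- Artin's wildly ramified `ℤ/2`-action on `S = F₂[[u,v]]`: the involution `σ` with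
`σ(u) = u/(1+u)` and `σ(v) = v/(1+v)` (equivalently `σ(u)·(1+u) = u`, `σ(v)·(1+v) = v`),
which is a continuous ring endomorphism; continuity is expressed coefficientwise. -/
def IsArtinInvolution (σ : MvPowerSeries (Fin 2) (ZMod 2) →+* MvPowerSeries (Fin 2) (ZMod 2)) :
    Prop :=
  (∀ s, σ (σ s) = s) ∧
  σ (X 0) * (1 + X 0) = X 0 ∧
  σ (X 1) * (1 + X 1) = X 1 ∧
  -- continuity: the degree-`d` coefficient of `σ f` only depends on the coefficients of `f`
  -- in degrees `≤ d`
  (∀ (f g : MvPowerSeries (Fin 2) (ZMod 2)) (d : Fin 2 →₀ ℕ),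
    (∀ d' : Fin 2 →₀ ℕ, d' ≤ d → coeff d' f = coeff d' g) →
    coeff d (σ f) = coeff d (σ g))

open Filter Topology
open scoped MvPowerSeries.WithPiTopology

namespace MvPowerSeries

variable {ι R : Type*}

instance [Semiring R] (p : ℕ) [CharP R p] : CharP (MvPowerSeries ι R) p :=
  charP_of_injective_ringHom C_injective p

theorem map_C_zmod {n : ℕ} (φ : MvPowerSeries ι (ZMod n) →+* MvPowerSeries ι (ZMod n))
    (c : ZMod n) : φ (C c) = C c :=
  DFunLike.congr_fun (RingHom.ext_zmod (φ.comp C) C) c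

theorem monomial_eq_C_mul_X_pow_mul_X_pow [CommSemiring R] (d : Fin 2 →₀ ℕ) (c : R) :
    monomial d c = C c * (X 0 ^ d 0 * X 1 ^ d 1) := by
  have hd : d = Finsupp.single 0 (d 0) + Finsupp.single 1 (d 1) := by
    ext i; fin_cases i <;> simp
  rw [X_pow_eq, X_pow_eq, monomial_mul_monomial, ← monomial_zero_eq_C_apply,
    monomial_mul_monomial, zero_add, mul_one, mul_one, ← hd]

namespace WithPiTopology

theorem summable_of_tendsto_order_cofinite_nhds_top {κ : Type*} [Semiring R] [TopologicalSpace R]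
    {f : κ → MvPowerSeries ι R} (h : Tendsto (fun i ↦ (f i).order) cofinite (𝓝 ⊤)) :
    Summable f := by
  rw [summable_iff_summable_coeff]
  intro d
  apply summable_of_hasFiniteSupport
  refine (eventually_cofinite.mp (ENat.tendsto_nhds_top_iff_natCast_lt.mp h d.degree)).subset ?_
  intro i hi hlt
  exact hi (coeff_of_lt_order hlt)

theorem continuous_of_coeff_congr [Semiring R] [TopologicalSpace R] [DiscreteTopology R]
    {φ : MvPowerSeries ι R → MvPowerSeries ι R}
    (hφ : ∀ f g d, (∀ d' ≤ d, coeff d' f = coeff d' g) → coeff d (φ f) = coeff d (φ g)) :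
    Continuous φ := by
  classical
  refine continuous_pi fun d ↦ IsLocallyConstant.continuous ?_
  rw [IsLocallyConstant.iff_eventually_eq]
  intro f
  have hnear : ∀ᶠ g in 𝓝 f, ∀ d' ∈ Finset.Iic d, coeff d' g = coeff d' f :=
    (eventually_all_finset _).mpr fun d' _ ↦
      (continuous_coeff R d').continuousAt.preimage_mem_nhds
        ((isOpen_discrete {coeff d' f}).mem_nhds rfl)
  filter_upwards [hnear] with g hg
  exact hφ g f d fun d' hd' ↦ hg d' (Finset.mem_Iic.mpr hd')

theorem summable_C_coeff_mul [Semiring R] [TopologicalSpace R] (f : MvPowerSeries (Fin 2) R)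
    {P Q : ℕ → MvPowerSeries (Fin 2) R} (hP : ∀ n, (((n - 1) / 2 : ℕ) : ℕ∞) ≤ (P n).order)
    (hQ : ∀ n, (((n - 1) / 2 : ℕ) : ℕ∞) ≤ (Q n).order) :
    Summable fun d ↦ C (coeff d f) * (P (d 0) * Q (d 1)) := by
  refine summable_of_tendsto_order_cofinite_nhds_top <|
    ENat.tendsto_nhds_top_iff_natCast_lt.mpr fun N ↦ eventually_cofinite.mpr <|
      (Finsupp.finite_of_degree_le (2 * N + 4)).subset fun d hd ↦ ?_
  rw [Set.mem_ofPred_eq] at hd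
  have hbound : ((((d 0 - 1) / 2 + (d 1 - 1) / 2 : ℕ)) : ℕ∞) ≤ N := calc
    _ = (((d 0 - 1) / 2 : ℕ) : ℕ∞) + (((d 1 - 1) / 2 : ℕ) : ℕ∞) := by push_cast; rfl
    _ ≤ (P (d 0)).order + (Q (d 1)).order := add_le_add (hP _) (hQ _)
    _ ≤ (P (d 0) * Q (d 1)).order := le_order_mul
    _ ≤ (C (coeff d f) * (P (d 0) * Q (d 1))).order := by
      rw [← smul_eq_C_mul]; exact le_order_smul
    _ ≤ N := not_lt.mp hd
  have := Nat.cast_le.mp hbound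
  simp only [Set.mem_ofPred_eq, Finsupp.degree_eq_sum, Fin.sum_univ_two]
  omega

end WithPiTopology

end MvPowerSeries

section QuadraticPowers

variable {A B : Type*} [CommRing A] [CommRing B]

/-- `w ^ n = p + q * w` with `(p, q) = quadPowCoords a b n`, whenever `w ^ 2 = a * w + b`. -/
def quadPowCoords (a b : A) : ℕ → A × A
  | 0 => (1, 0)
  | n + 1 => (b * (quadPowCoords a b n).2, (quadPowCoords a b n).1 + a * (quadPowCoords a b n).2)

theorem pow_eq_quadPowCoords {a b w : A} (hw : w ^ 2 = a * w + b) (n : ℕ) :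
    w ^ n = (quadPowCoords a b n).1 + (quadPowCoords a b n).2 * w := by
  induction n with
  | zero => simp [quadPowCoords]
  | succ n ih =>
    rw [pow_succ, ih, quadPowCoords]
    linear_combination (quadPowCoords a b n).2 * hw

theorem map_quadPowCoords (φ : A →+* B) (a b : A) (n : ℕ) :
    Prod.map φ φ (quadPowCoords a b n) = quadPowCoords (φ a) (φ b) n := by
  induction n with
  | zero => simp [quadPowCoords]
  | succ n ih =>
    rw [Prod.ext_iff] at ih
    simp only [quadPowCoords, Prod.map, map_mul, map_add, ← ih.1, ← ih.2]

theorem order_quadPowCoords {ι : Type*} {a b : MvPowerSeries ι A} (ha : constantCoeff a = 0)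
    (hb : constantCoeff b = 0) (n : ℕ) :
    ((n / 2 : ℕ) : ℕ∞) ≤ (quadPowCoords a b n).1.order ∧
      (((n - 1) / 2 : ℕ) : ℕ∞) ≤ (quadPowCoords a b n).2.order := by
  rw [← one_le_order_iff_constCoeff_eq_zero] at ha hb
  induction n with
  | zero => simp [quadPowCoords]
  | succ n ih =>
    have hq : (((n + 1) / 2 : ℕ) : ℕ∞) ≤ 1 + (((n - 1) / 2 : ℕ) : ℕ∞) := by
      exact_mod_cast (by omega : (n + 1) / 2 ≤ 1 + (n - 1) / 2)
    constructor
    · exact hq.trans ((add_le_add hb ih.2).trans le_order_mul)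
    · refine le_trans (le_min ih.1 ?_) min_order_le_add
      exact le_trans (by exact_mod_cast (by omega : n / 2 ≤ 1 + (n - 1) / 2))
        ((add_le_add ha ih.2).trans le_order_mul)

end QuadraticPowers

theorem HasSum.apply_eq_self {α β F : Type*} [AddCommMonoid α] [TopologicalSpace α] [T2Space α]
    [FunLike F α α] [AddMonoidHomClass F α α] {φ : F} (hφ : Continuous φ) {g : β → α} {a : α}
    (hg : HasSum g a) (hfix : ∀ i, φ (g i) = g i) : φ a = a :=
  (by simpa only [Function.comp_def, hfix] using hg.map φ hφ : HasSum g (φ a)).unique hg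

theorem CharTwo.mul_add_map_mul_eq {A : Type*} [CommRing A] [CharP A 2] (φ : A →+* A)
    (s t : A) :
    s * t + φ (s * t) = (s + φ s) * (t + φ t) + (s * φ t + φ s * t) := by
  rw [map_mul]
  linear_combination (-(s * φ t + φ s * t)) * CharTwo.two_eq_zero (R := A)

local notation "𝕊" => MvPowerSeries (Fin 2) (ZMod 2)

namespace IsArtinInvolution

open MvPowerSeries.WithPiTopology

variable {σ : 𝕊 →+* 𝕊}

theorem map_trace (hσ : IsArtinInvolution σ) (s : 𝕊) : σ (s + σ s) = s + σ s := by
  rw [map_add, hσ.1, add_comm]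

theorem map_X_mul_one_add_X (hσ : IsArtinInvolution σ) (i : Fin 2) :
    σ (X i) * (1 + X i) = X i := by
  fin_cases i
  exacts [hσ.2.1, hσ.2.2.1]

theorem constantCoeff_map_X (hσ : IsArtinInvolution σ) (i : Fin 2) :
    constantCoeff (σ (X i)) = 0 := by
  simpa using congrArg constantCoeff (hσ.map_X_mul_one_add_X i)

theorem X_sq (hσ : IsArtinInvolution σ) (i : Fin 2) :
    X i ^ 2 = (X i + σ (X i)) * X i + (X i + σ (X i)) := by
  linear_combination (-1 : 𝕊) * hσ.map_X_mul_one_add_X i - X i * CharTwo.two_eq_zero (R := 𝕊)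

theorem continuous (hσ : IsArtinInvolution σ) : Continuous σ :=
  continuous_of_coeff_congr hσ.2.2.2

theorem quadPowCoords_trace_X (hσ : IsArtinInvolution σ) (i : Fin 2) (n : ℕ) :
    let c := quadPowCoords (X i + σ (X i)) (X i + σ (X i)) n
    (σ c.1 = c.1 ∧ σ c.2 = c.2) ∧
      ((((n - 1) / 2 : ℕ) : ℕ∞) ≤ c.1.order ∧ (((n - 1) / 2 : ℕ) : ℕ∞) ≤ c.2.order) := by
  have hmap := map_quadPowCoords σ (X i + σ (X i)) (X i + σ (X i)) n
  rw [hσ.map_trace, Prod.ext_iff] at hmap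
  have hcc : constantCoeff (X i + σ (X i)) = 0 := by simp [hσ.constantCoeff_map_X]
  obtain ⟨h1, h2⟩ := order_quadPowCoords hcc hcc n
  exact ⟨hmap, le_trans (by gcongr; omega) h1, h2⟩

theorem exists_fixed_hasSum (hσ : IsArtinInvolution σ) (f : 𝕊) {P Q : ℕ → 𝕊}
    (hPσ : ∀ n, σ (P n) = P n) (hQσ : ∀ n, σ (Q n) = Q n)
    (hP : ∀ n, (((n - 1) / 2 : ℕ) : ℕ∞) ≤ (P n).order)
    (hQ : ∀ n, (((n - 1) / 2 : ℕ) : ℕ∞) ≤ (Q n).order) :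
    ∃ a, σ a = a ∧ HasSum (fun d ↦ C (coeff d f) * (P (d 0) * Q (d 1))) a := by
  have hs := (summable_C_coeff_mul f hP hQ).hasSum
  exact ⟨_, hs.apply_eq_self hσ.continuous fun d ↦ by simp only [map_mul, map_C_zmod, hPσ, hQσ], hs⟩

theorem exists_fixed_eq_add_mul_X (hσ : IsArtinInvolution σ) (f : 𝕊) :
    ∃ α β γ δ, σ α = α ∧ σ β = β ∧ σ γ = γ ∧ σ δ = δ ∧
      f = α + β * X 0 + γ * X 1 + δ * (X 0 * X 1) := by
  have h := hσ.quadPowCoords_trace_X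
  obtain ⟨α, hα, hA⟩ := hσ.exists_fixed_hasSum f (fun n ↦ (h 0 n).1.1) (fun n ↦ (h 1 n).1.1)
    (fun n ↦ (h 0 n).2.1) (fun n ↦ (h 1 n).2.1)
  obtain ⟨β, hβ, hB⟩ := hσ.exists_fixed_hasSum f (fun n ↦ (h 0 n).1.2) (fun n ↦ (h 1 n).1.1)
    (fun n ↦ (h 0 n).2.2) (fun n ↦ (h 1 n).2.1)
  obtain ⟨γ, hγ, hC⟩ := hσ.exists_fixed_hasSum f (fun n ↦ (h 0 n).1.1) (fun n ↦ (h 1 n).1.2)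
    (fun n ↦ (h 0 n).2.1) (fun n ↦ (h 1 n).2.2)
  obtain ⟨δ, hδ, hD⟩ := hσ.exists_fixed_hasSum f (fun n ↦ (h 0 n).1.2) (fun n ↦ (h 1 n).1.2)
    (fun n ↦ (h 0 n).2.2) (fun n ↦ (h 1 n).2.2)
  refine ⟨α, β, γ, δ, hα, hβ, hγ, hδ, (hasSum_of_monomials_self f).unique ?_⟩
  convert ((hA.add (hB.mul_right (X 0))).add (hC.mul_right (X 1))).add
    (hD.mul_right (X 0 * X 1)) using 1
  funext d
  rw [monomial_eq_C_mul_X_pow_mul_X_pow, pow_eq_quadPowCoords (hσ.X_sq 0),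
    pow_eq_quadPowCoords (hσ.X_sq 1)]
  ring

theorem range_trace (hσ : IsArtinInvolution σ) :
    (Set.range fun s ↦ s + σ s) =
      {w : 𝕊 | ∃ a b c, σ a = a ∧ σ b = b ∧ σ c = c ∧
        w = a * (X 0 + σ (X 0)) + b * (X 1 + σ (X 1)) +
            c * (X 0 * σ (X 1) + σ (X 0) * X 1)} := by
  ext w
  constructor
  · rintro ⟨s, rfl⟩
    obtain ⟨α, β, γ, δ, hα, hβ, hγ, hδ, rfl⟩ := hσ.exists_fixed_eq_add_mul_X s
    refine ⟨β, γ + δ * (X 0 + σ (X 0)), δ, hβ, ?_, hδ, ?_⟩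
    · rw [map_add, map_mul, hγ, hδ, hσ.map_trace]
    · simp only [map_add, map_mul, hα, hβ, hγ, hδ]
      linear_combination (α - δ * (X 0 * σ (X 1) + σ (X 0) * X 1)) * CharTwo.two_eq_zero (R := 𝕊)
  · rintro ⟨a, b, c, ha, hb, hc, rfl⟩
    refine ⟨a * X 0 + b * X 1 + c * (X 0 * σ (X 1)), ?_⟩
    simp only [map_add, map_mul, ha, hb, hc, hσ.1]
    ring

theorem range_trace_ne (hσ : IsArtinInvolution σ) :
    (Set.range fun s ↦ s + σ s) ≠ {w : 𝕊 | σ w = w} := by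
  intro h
  have h1 : (1 : 𝕊) ∈ Set.range fun s ↦ s + σ s := h ▸ map_one σ
  rw [hσ.range_trace] at h1
  obtain ⟨a, b, c, -, -, -, h1⟩ := h1
  simpa [hσ.constantCoeff_map_X] using congrArg constantCoeff h1

end IsArtinInvolution

/-- Artin's example.  Let `S = F₂[[u,v]]` with the wild `ℤ/2`-action `σ`,
and let `R = S^σ` be the invariant subring (a `D₄`-rational double point, presented as
`F₂[[x,y,z]]/(z² + xyz + xy² + x²y)` with `x = u + ū`, `y = v + v̄`, `z = uv̄ + ūv`).
The trace `Tr(s) = s + σ(s)` of the degree-two extension `Frac(R) ⊆ Frac(S)` satisfies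
`Tr(u) = x`, `Tr(v) = y`, `Tr(uv) = xy + z`, takes values in `R`, and its image is exactly
the maximal ideal `⟨x, y, z⟩ ⊊ R`; in particular `Tr` is not surjective onto `R`. -/
theorem artin_example_trace_not_surjective
    (σ : MvPowerSeries (Fin 2) (ZMod 2) →+* MvPowerSeries (Fin 2) (ZMod 2))
    (hσ : IsArtinInvolution σ) :
    -- notation: `u = X 0`, `v = X 1`, `x = u + σ u`, `y = v + σ v`, `z = u·σv + σu·v`,
    -- `Tr s = s + σ s`
    (fun s => s + σ s) (X 0) = X 0 + σ (X 0) ∧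
    (fun s => s + σ s) (X 1) = X 1 + σ (X 1) ∧
    (fun s => s + σ s) (X 0 * X 1) =
      (X 0 + σ (X 0)) * (X 1 + σ (X 1)) + (X 0 * σ (X 1) + σ (X 0) * X 1) ∧
    (∀ s, σ (s + σ s) = s + σ s) ∧
    (Set.range fun s => s + σ s) =
      {w : MvPowerSeries (Fin 2) (ZMod 2) | ∃ a b c, σ a = a ∧ σ b = b ∧ σ c = c ∧
        w = a * (X 0 + σ (X 0)) + b * (X 1 + σ (X 1)) +
            c * (X 0 * σ (X 1) + σ (X 0) * X 1)} ∧
    (Set.range fun s => s + σ s) ≠ {w : MvPowerSeries (Fin 2) (ZMod 2) | σ w = w} :=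
  ⟨rfl, rfl, CharTwo.mul_add_map_mul_eq σ _ _, hσ.map_trace, hσ.range_trace, hσ.range_trace_ne⟩
end
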